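/- arXiv:math/0612027 — 5 statements merged into one kernel-verified Lean document; each statement's English description precedes it below -/
import Mathlib

section
/- If the contraction condition ∑_{k=1}^n a_k|d_k|^p < 1 holds for some 1 ≤ p < ∞, then there exists a unique function f ∈ L_p[0,1] satisfying the self-similarity equation G(f) = f. -/
open MeasureTheory Set Finset

/-- The similarity operator `G` on functions on `[0,1]`. -/
noncomputable def simOp (n : ℕ) (a c d β α : ℕ → ℝ) (f : ℝ → ℝ) : ℝ → ℝ := fun x =>
  ∑ k ∈ Finset.range n,
    Set.indicator (Set.Ioo (α k) (α (k + 1)))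
      (fun y => β k + c k * ((y - α k) / a k) + d k * f ((y - α k) / a k)) x

open scoped ENNReal

/-! On the piece `(α k, α (k + 1))`, `G f - G g` is `d k • (f - g)` composed with the affine
bijection `x ↦ (x - α k) / a k` onto `(0, 1)`, so substituting gives
`‖G f - G g‖ₚᵖ = (∑ a k |d k|ᵖ) ‖f - g‖ₚᵖ`. Hence `G` is a contraction of `L_p(0, 1)` and the
Banach fixed point theorem applies. -/

section FixedPoint

variable {X : Type*} [MeasurableSpace X] {μ : Measure X} {p K : ℝ≥0∞} {G : (X → ℝ) → X → ℝ}

lemma ae_eq_of_eLpNorm_sub_le [Fact (1 ≤ p)] (hmeas : ∀ f, Measurable f → Measurable (G f))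
    (hlip : ∀ f g, Measurable f → Measurable g → MemLp f p μ → MemLp g p μ →
      eLpNorm (G f - G g) p μ ≤ K * eLpNorm (f - g) p μ)
    {f g : X → ℝ} (hf : Measurable f) (hg : Measurable g) (hfp : MemLp f p μ) (hgp : MemLp g p μ)
    (hfg : f =ᵐ[μ] g) : G f =ᵐ[μ] G g := by
  have hp0 : p ≠ 0 := (zero_lt_one.trans_le Fact.out).ne'
  have h_sub : eLpNorm (f - g) p μ = 0 :=
    (eLpNorm_eq_zero_iff (hf.sub hg).aestronglyMeasurable hp0).2 hfg.sub_eq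
  have hG_sub : eLpNorm (G f - G g) p μ = 0 :=
    le_antisymm ((hlip f g hf hg hfp hgp).trans (by rw [h_sub, mul_zero])) bot_le
  exact Filter.eventuallyEq_iff_sub.2
    ((eLpNorm_eq_zero_iff ((hmeas f hf).sub (hmeas g hg)).aestronglyMeasurable hp0).1 hG_sub)

theorem exists_ae_fixedPoint_of_eLpNorm_sub_le [Fact (1 ≤ p)] (hK : K < 1)
    (hmeas : ∀ f, Measurable f → Measurable (G f))
    (hmem : ∀ f, Measurable f → MemLp f p μ → MemLp (G f) p μ)
    (hlip : ∀ f g, Measurable f → Measurable g → MemLp f p μ → MemLp g p μ →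
      eLpNorm (G f - G g) p μ ≤ K * eLpNorm (f - g) p μ) :
    ∃ f, Measurable f ∧ MemLp f p μ ∧ G f =ᵐ[μ] f ∧
      ∀ g, Measurable g → MemLp g p μ → G g =ᵐ[μ] g → g =ᵐ[μ] f := by
  have hmeasLp (f : Lp ℝ p μ) : Measurable f := (Lp.stronglyMeasurable f).measurable
  let T : Lp ℝ p μ → Lp ℝ p μ := fun f => (hmem f (hmeasLp f) (Lp.memLp f)).toLp (G f)
  have hT (f : Lp ℝ p μ) : T f =ᵐ[μ] G f := MemLp.coeFn_toLp _
  have hK' : (K.toNNReal : ℝ≥0∞) = K := ENNReal.coe_toNNReal (ne_top_of_lt hK)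
  have hT_contr : ContractingWith K.toNNReal T := by
    refine ⟨by rwa [← ENNReal.coe_lt_coe, hK', ENNReal.coe_one], fun f g => ?_⟩
    rw [Lp.edist_def, Lp.edist_def, eLpNorm_congr_ae ((hT f).sub (hT g)), hK']
    exact hlip f g (hmeasLp f) (hmeasLp g) (Lp.memLp f) (Lp.memLp g)
  set f₀ := ContractingWith.fixedPoint T hT_contr
  refine ⟨f₀, hmeasLp f₀, Lp.memLp f₀, ?_, fun g hg hgp hfix => ?_⟩
  · have hf₀ : T f₀ = f₀ := hT_contr.fixedPoint_isFixedPt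
    exact (hT f₀).symm.trans (by rw [hf₀])
  · have hg_eq : g =ᵐ[μ] hgp.toLp g := hgp.coeFn_toLp.symm
    have hG_eq : G (hgp.toLp g) =ᵐ[μ] G g :=
      ae_eq_of_eLpNorm_sub_le hmeas hlip (hmeasLp _) hg (Lp.memLp _) hgp hg_eq.symm
    have hg_fix : T (hgp.toLp g) = hgp.toLp g :=
      Lp.ext ((hT _).trans (hG_eq.trans (hfix.trans hg_eq)))
    rwa [hT_contr.fixedPoint_unique hg_fix] at hg_eq

end FixedPoint

lemma setLIntegral_Ioo_comp_div {A : ℝ} (hA : 0 < A) (b : ℝ) (φ : ℝ → ℝ≥0∞) :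
    ∫⁻ x in Ioo b (b + A), φ ((x - b) / A) = ENNReal.ofReal A * ∫⁻ t in Ioo 0 1, φ t := by
  have himage : (A * · + b) '' Ioo 0 1 = Ioo b (b + A) := by
    rw [image_affine_Ioo hA, mul_zero, zero_add, mul_one, add_comm]
  rw [← himage, lintegral_image_eq_lintegral_abs_deriv_mul measurableSet_Ioo
      (fun x _ => ((hasDerivAt_id' x).const_mul A |>.add_const b).hasDerivWithinAt)
      (fun x _ y _ h => by simpa [hA.ne'] using h),
    ← lintegral_const_mul' _ _ ENNReal.ofReal_ne_top]
  refine setLIntegral_congr_fun measurableSet_Ioo fun t _ => ?_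
  simp [abs_of_pos hA, hA.ne']

section Partition

variable {n : ℕ} {a α : ℕ → ℝ}

/-- `α` itself need not be monotone beyond `n`; freezing it there lets the library's lemmas on
the intervals `Ioc (f k) (f (k + 1))` of a monotone `f` apply. -/
lemma monotone_min_partition (ha : ∀ k < n, 0 < a k) (hα : ∀ k, α (k + 1) = α k + a k) :
    Monotone fun k => α (min k n) := by
  refine monotone_nat_of_le_succ fun k => ?_
  rcases lt_or_ge k n with hk | hk
  · simp [min_eq_left hk.le, min_eq_left (Nat.add_one_le_of_lt hk), hα, (ha k hk).le]
  · simp [min_eq_right hk, min_eq_right (hk.trans k.le_succ)]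

lemma pairwiseDisjoint_Ioc_partition (ha : ∀ k < n, 0 < a k) (hα : ∀ k, α (k + 1) = α k + a k) :
    (Finset.range n : Set ℕ).PairwiseDisjoint fun k => Set.Ioc (α k) (α (k + 1)) := by
  intro i hi j hj hij
  simp only [coe_range, Set.mem_Iio] at hi hj
  simpa [min_eq_left hi.le, min_eq_left hj.le, min_eq_left (Nat.add_one_le_of_lt hi),
    min_eq_left (Nat.add_one_le_of_lt hj)] using
    (monotone_min_partition ha hα).pairwise_disjoint_on_Ioc_succ hij

lemma biUnion_Ioc_partition (ha : ∀ k < n, 0 < a k) (hα : ∀ k, α (k + 1) = α k + a k) :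
    ⋃ k ∈ Finset.range n, Set.Ioc (α k) (α (k + 1)) = Set.Ioc (α 0) (α n) := by
  have h := (monotone_min_partition ha hα).biUnion_Ico_Ioc_map_succ 0 n
  simp only [Set.mem_Ico, zero_le, true_and, Order.succ_eq_add_one, min_self, Nat.zero_min] at h
  rw [← h]
  simp only [Finset.mem_range]
  exact iUnion₂_congr fun i hi => by rw [min_eq_left hi.le, min_eq_left hi]

lemma lintegral_Ioo_eq_sum_partition (ha : ∀ k < n, 0 < a k) (hα0 : α 0 = 0)
    (hα : ∀ k, α (k + 1) = α k + a k) (hsum : ∑ k ∈ Finset.range n, a k = 1) (F : ℝ → ℝ≥0∞) :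
    ∫⁻ x in Set.Ioo 0 1, F x = ∑ k ∈ Finset.range n, ∫⁻ x in Set.Ioo (α k) (α (k + 1)), F x := by
  have hαn : α n = 1 := (sum_range_induction a α hα0 n fun k _ => hα k).symm.trans hsum
  simp only [Measure.restrict_congr_set Ioo_ae_eq_Ioc]
  rw [← hα0, ← hαn, ← biUnion_Ioc_partition ha hα,
    lintegral_biUnion_finset (pairwiseDisjoint_Ioc_partition ha hα) fun _ _ => measurableSet_Ioc]

end Partition

section SimOp

variable {n : ℕ} {a c d β α : ℕ → ℝ}

lemma simOp_apply_of_mem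
    (hdisj : (Finset.range n : Set ℕ).PairwiseDisjoint fun k => Set.Ioo (α k) (α (k + 1)))
    (f : ℝ → ℝ) {k : ℕ} (hk : k < n) {x : ℝ} (hx : x ∈ Set.Ioo (α k) (α (k + 1))) :
    simOp n a c d β α f x = β k + c k * ((x - α k) / a k) + d k * f ((x - α k) / a k) := by
  rw [simOp, Finset.sum_eq_single_of_mem k (Finset.mem_range.2 hk), indicator_of_mem hx]
  intro j hj hjk
  exact indicator_of_notMem (Set.disjoint_right.1 (hdisj hj (Finset.mem_range.2 hk) hjk) hx) _

lemma measurable_simOp {f : ℝ → ℝ} (hf : Measurable f) : Measurable (simOp n a c d β α f) := by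
  have ht (k : ℕ) : Measurable fun y : ℝ => (y - α k) / a k :=
    (measurable_id.sub_const _).div_const _
  exact Finset.measurable_sum _ fun k _ =>
    ((((ht k).const_mul _).const_add _).add ((hf.comp (ht k)).const_mul _)).indicator
      measurableSet_Ioo

lemma abs_simOp_zero_le (ha : ∀ k < n, 0 < a k) (hα : ∀ k, α (k + 1) = α k + a k) (x : ℝ) :
    |simOp n a c d β α 0 x| ≤ ∑ k ∈ Finset.range n, (|β k| + |c k|) := by
  refine (Finset.abs_sum_le_sum_abs _ _).trans (Finset.sum_le_sum fun k hk => ?_)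
  rw [Finset.mem_range] at hk
  by_cases hx : x ∈ Set.Ioo (α k) (α (k + 1))
  · have ht : |(x - α k) / a k| ≤ 1 := by
      rw [hα k] at hx
      rw [abs_div, abs_of_pos (ha k hk), div_le_one (ha k hk), abs_le]
      constructor <;> linarith [hx.1, hx.2]
    rw [indicator_of_mem hx, Pi.zero_apply, mul_zero, add_zero]
    calc |β k + c k * ((x - α k) / a k)| ≤ |β k| + |c k| * |(x - α k) / a k| :=
          (abs_add_le _ _).trans_eq (by rw [abs_mul])
      _ ≤ |β k| + |c k| := by gcongr; exact mul_le_of_le_one_right (abs_nonneg _) ht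
  · rw [indicator_of_notMem hx, abs_zero]
    positivity

lemma lintegral_enorm_simOp_sub_rpow (ha : ∀ k < n, 0 < a k) (hα0 : α 0 = 0)
    (hα : ∀ k, α (k + 1) = α k + a k) (hsum : ∑ k ∈ Finset.range n, a k = 1)
    {q : ℝ} (hq : 0 ≤ q) (f g : ℝ → ℝ) :
    ∫⁻ x in Set.Ioo 0 1, ‖simOp n a c d β α f x - simOp n a c d β α g x‖ₑ ^ q =
      ENNReal.ofReal (∑ k ∈ Finset.range n, a k * |d k| ^ q) *
        ∫⁻ t in Set.Ioo 0 1, ‖f t - g t‖ₑ ^ q := by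
  have hdisj := (pairwiseDisjoint_Ioc_partition ha hα).mono fun _ => Ioo_subset_Ioc_self
  rw [lintegral_Ioo_eq_sum_partition ha hα0 hα hsum, ENNReal.ofReal_sum_of_nonneg fun k hk =>
    mul_nonneg (ha k (Finset.mem_range.1 hk)).le (by positivity), Finset.sum_mul]
  refine Finset.sum_congr rfl fun k hk => ?_
  rw [Finset.mem_range] at hk
  have hpiece : ∀ x ∈ Set.Ioo (α k) (α (k + 1)),
      ‖simOp n a c d β α f x - simOp n a c d β α g x‖ₑ ^ q =
        ENNReal.ofReal (|d k| ^ q) * ‖f ((x - α k) / a k) - g ((x - α k) / a k)‖ₑ ^ q := by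
    intro x hx
    rw [simOp_apply_of_mem hdisj f hk hx, simOp_apply_of_mem hdisj g hk hx,
      add_sub_add_left_eq_sub, ← mul_sub, enorm_mul, ENNReal.mul_rpow_of_nonneg _ _ hq,
      Real.enorm_eq_ofReal_abs, ENNReal.ofReal_rpow_of_nonneg (abs_nonneg _) hq]
  rw [setLIntegral_congr_fun measurableSet_Ioo hpiece, hα k,
    setLIntegral_Ioo_comp_div (ha k hk) _ fun t => ENNReal.ofReal (|d k| ^ q) * ‖f t - g t‖ₑ ^ q,
    lintegral_const_mul' _ _ ENNReal.ofReal_ne_top, ← mul_assoc,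
    ← ENNReal.ofReal_mul (ha k hk).le]

variable {p : ℝ≥0∞}

lemma eLpNorm_simOp_sub (ha : ∀ k < n, 0 < a k) (hα0 : α 0 = 0)
    (hα : ∀ k, α (k + 1) = α k + a k) (hsum : ∑ k ∈ Finset.range n, a k = 1)
    (hp0 : p ≠ 0) (hp_top : p ≠ ∞) (f g : ℝ → ℝ) :
    eLpNorm (simOp n a c d β α f - simOp n a c d β α g) p (volume.restrict (Set.Ioo 0 1)) =
      ENNReal.ofReal (∑ k ∈ Finset.range n, a k * |d k| ^ p.toReal) ^ (1 / p.toReal) *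
        eLpNorm (f - g) p (volume.restrict (Set.Ioo 0 1)) := by
  simp only [eLpNorm_eq_lintegral_rpow_enorm_toReal hp0 hp_top, Pi.sub_apply]
  rw [lintegral_enorm_simOp_sub_rpow ha hα0 hα hsum ENNReal.toReal_nonneg,
    ENNReal.mul_rpow_of_nonneg _ _ (by positivity)]

lemma memLp_simOp (ha : ∀ k < n, 0 < a k) (hα0 : α 0 = 0)
    (hα : ∀ k, α (k + 1) = α k + a k) (hsum : ∑ k ∈ Finset.range n, a k = 1)
    (hp0 : p ≠ 0) (hp_top : p ≠ ∞) {f : ℝ → ℝ} (hf : Measurable f)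
    (hfp : MemLp f p (volume.restrict (Set.Ioo 0 1))) :
    MemLp (simOp n a c d β α f) p (volume.restrict (Set.Ioo 0 1)) := by
  have hzero : MemLp (simOp n a c d β α 0) p (volume.restrict (Set.Ioo 0 1)) :=
    MemLp.of_bound (measurable_simOp measurable_zero).aestronglyMeasurable _
      (ae_of_all _ (abs_simOp_zero_le ha hα))
  have hsub : MemLp (simOp n a c d β α f - simOp n a c d β α 0) p
      (volume.restrict (Set.Ioo 0 1)) := by
    refine ⟨((measurable_simOp hf).sub (measurable_simOp measurable_zero)).aestronglyMeasurable,
      ?_⟩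
    rw [eLpNorm_simOp_sub ha hα0 hα hsum hp0 hp_top, sub_zero]
    exact ENNReal.mul_lt_top (ENNReal.rpow_lt_top_of_nonneg (by positivity) ENNReal.ofReal_ne_top)
      hfp.2
  simpa using hsub.add hzero

end SimOp

theorem stmt_2_general (n : ℕ) (a c d β : ℕ → ℝ)
    (ha : ∀ k < n, 0 < a k) (hsum : ∑ k ∈ Finset.range n, a k = 1)
    (p : ℝ) (hp : 1 ≤ p)
    (α : ℕ → ℝ) (hα0 : α 0 = 0) (hα : ∀ k, α (k + 1) = α k + a k)
    (hcontr : ∑ k ∈ Finset.range n, a k * |d k| ^ p < 1) :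
    ∃ f : ℝ → ℝ, Measurable f ∧
      IntegrableOn (fun t => |f t| ^ p) (Set.Ioo 0 1) ∧
      (∀ᵐ x ∂(volume.restrict (Set.Ioo (0:ℝ) 1)), simOp n a c d β α f x = f x) ∧
      ∀ g : ℝ → ℝ, Measurable g →
        IntegrableOn (fun t => |g t| ^ p) (Set.Ioo 0 1) →
        (∀ᵐ x ∂(volume.restrict (Set.Ioo (0:ℝ) 1)), simOp n a c d β α g x = g x) →
        ∀ᵐ x ∂(volume.restrict (Set.Ioo (0:ℝ) 1)), g x = f x := by
  have hp_toReal : (ENNReal.ofReal p).toReal = p := ENNReal.toReal_ofReal (by linarith)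
  have hp0 : ENNReal.ofReal p ≠ 0 := (ENNReal.ofReal_pos.2 (by linarith)).ne'
  have : Fact (1 ≤ ENNReal.ofReal p) := ⟨ENNReal.one_le_ofReal.2 hp⟩
  have hmemLp {g : ℝ → ℝ} (hg : Measurable g) : IntegrableOn (fun t => |g t| ^ p) (Set.Ioo 0 1) ↔
      MemLp g (ENNReal.ofReal p) (volume.restrict (Set.Ioo 0 1)) := by
    rw [← integrable_norm_rpow_iff hg.aestronglyMeasurable hp0 ENNReal.ofReal_ne_top, hp_toReal]
    rfl
  have hK : ENNReal.ofReal (∑ k ∈ Finset.range n, a k * |d k| ^ p) ^ (1 / p) < 1 :=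
    ENNReal.rpow_lt_one (ENNReal.ofReal_lt_one.2 hcontr) (by positivity)
  obtain ⟨f, hf, hfp, hfix, huniq⟩ :=
    exists_ae_fixedPoint_of_eLpNorm_sub_le (G := simOp n a c d β α) hK
      (fun _ => measurable_simOp) (fun _ => memLp_simOp ha hα0 hα hsum hp0 ENNReal.ofReal_ne_top)
      fun f g _ _ _ _ => by
        rw [eLpNorm_simOp_sub ha hα0 hα hsum hp0 ENNReal.ofReal_ne_top, hp_toReal]
  exact ⟨f, hf, (hmemLp hf).2 hfp, hfix, fun g hg hgp => huniq g hg ((hmemLp hg).1 hgp)⟩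

/-- If `∑ a_k |d_k|^p < 1` then there is a unique (up to a.e. equality) function
`f ∈ L_p[0,1]` with `G f = f`. -/
theorem stmt_2 (n : ℕ) (hn : 1 < n) (a c d β : ℕ → ℝ)
    (ha : ∀ k < n, 0 < a k) (hsum : ∑ k ∈ Finset.range n, a k = 1)
    (p : ℝ) (hp : 1 ≤ p)
    (α : ℕ → ℝ) (hα0 : α 0 = 0) (hα : ∀ k, α (k + 1) = α k + a k)
    (hcontr : ∑ k ∈ Finset.range n, a k * |d k| ^ p < 1) :
    ∃ f : ℝ → ℝ, Measurable f ∧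
      IntegrableOn (fun t => |f t| ^ p) (Set.Ioo 0 1) ∧
      (∀ᵐ x ∂(volume.restrict (Set.Ioo (0:ℝ) 1)), simOp n a c d β α f x = f x) ∧
      ∀ g : ℝ → ℝ, Measurable g →
        IntegrableOn (fun t => |g t| ^ p) (Set.Ioo 0 1) →
        (∀ᵐ x ∂(volume.restrict (Set.Ioo (0:ℝ) 1)), simOp n a c d β α g x = g x) →
        ∀ᵐ x ∂(volume.restrict (Set.Ioo (0:ℝ) 1)), g x = f x :=
  stmt_2_general n a c d β ha hsum p hp α hα0 hα hcontr
end

section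
/- Let p be a positive integer and let f ∈ L_p[0,1] be the fixed point of the similarity operator G with parameters satisfying r_s = ∑_{k=1}^n a_k|d_k|^s < 1 for all s = 1,...,p. Then ‖f‖_{L_p[0,1]} ≤ (∑_{s=1}^p ‖{c,β}‖_{s,a}) / (∏_{s=1}^p (1 - r_s))^{1/p}, where ‖{c,β}‖_{s,a} = (∑_{k=1}^n (|c_k|+|β_k|)^s a_k)^{1/s}. -/
open MeasureTheory Set Finset

/-!
Write `I s = ∫₀¹ |f|^s` and `N s = ‖{c,β}‖_{s,a}`. Cutting `(0,1)` at the points `α k` and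
rescaling each piece to `(0,1)`, the fixed-point equation, `|t| ≤ 1` and the binomial theorem give
`I s ≤ ∑_{j ≤ s} C(s,j) (∑_k a_k (|c_k|+|β_k|)^(s-j) |d_k|^j) I j`. The `j = s` term is `r_s I s`,
and for `j < s` the weighted AM-GM inequality together with `r_s ≤ 1` bounds the inner sum by
`N s ^ (s-j)`. Hence `(1 - r_s) I s ≤ ∑_{j<s} C(s,j) N s^(s-j) I j`, whose right side is dominated
by the binomial expansion of `((N 1 + ⋯ + N (s-1)) + N s)^s` once the earlier moments are bounded;
induction gives `I p ∏_{s ≤ p} (1 - r_s) ≤ (N 1 + ⋯ + N p)^p`.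
-/

theorem add_mul_pow_mul_pow_le {x y : ℝ} (hx : 0 ≤ x) (hy : 0 ≤ y) (m j : ℕ) :
    (m + j : ℝ) * (x ^ m * y ^ j) ≤ m * x ^ (m + j) + j * y ^ (m + j) := by
  rcases (by positivity : (0 : ℝ) ≤ m + j).eq_or_lt with hs | hs
  · rw [← hs, zero_mul]; positivity
  have hroot : ∀ {z : ℝ} (i : ℕ), 0 ≤ z → (z ^ (m + j)) ^ ((i : ℝ) / (m + j)) = z ^ i :=
    fun {z} i hz => by
      rw [← Real.rpow_natCast z (m + j), ← Real.rpow_mul hz, Nat.cast_add,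
        mul_div_cancel₀ _ hs.ne', Real.rpow_natCast]
  have hamgm := Real.geom_mean_le_arith_mean2_weighted (p₁ := x ^ (m + j)) (p₂ := y ^ (m + j))
    (div_nonneg m.cast_nonneg hs.le) (div_nonneg j.cast_nonneg hs.le) (by positivity)
    (by positivity) (by rw [← add_div, div_self hs.ne'])
  rw [hroot m hx, hroot j hy] at hamgm
  calc (m + j : ℝ) * (x ^ m * y ^ j)
      ≤ (m + j) * (m / (m + j) * x ^ (m + j) + j / (m + j) * y ^ (m + j)) := by gcongr
    _ = _ := by field_simp

theorem sum_mul_pow_mul_pow_le {ι : Type*} (t : Finset ι) {w u v : ι → ℝ}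
    (hw : ∀ i ∈ t, 0 ≤ w i) (hu : ∀ i ∈ t, 0 ≤ u i) (hv : ∀ i ∈ t, 0 ≤ v i)
    {s j : ℕ} (hjs : j < s) (hv1 : ∑ i ∈ t, w i * v i ^ s ≤ 1) :
    ∑ i ∈ t, w i * (u i ^ (s - j) * v i ^ j)
      ≤ ((∑ i ∈ t, u i ^ s * w i) ^ ((1 : ℝ) / s)) ^ (s - j) := by
  obtain ⟨m, rfl⟩ : ∃ m, s = m + j := ⟨s - j, (Nat.sub_add_cancel hjs.le).symm⟩
  rw [Nat.add_sub_cancel]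
  have hm : m ≠ 0 := by omega
  have hM : 0 ≤ ∑ i ∈ t, u i ^ (m + j) * w i :=
    sum_nonneg fun i hi => mul_nonneg (pow_nonneg (hu i hi) _) (hw i hi)
  generalize hN : (∑ i ∈ t, u i ^ (m + j) * w i) ^ ((1 : ℝ) / ↑(m + j)) = N
  have hNM : N ^ (m + j) = ∑ i ∈ t, u i ^ (m + j) * w i := by
    rw [← hN, one_div]; exact Real.rpow_inv_natCast_pow hM (by omega)
  rcases (hN ▸ Real.rpow_nonneg hM _ : 0 ≤ N).eq_or_lt with hN0 | hN0
  · have hzero := (sum_eq_zero_iff_of_nonneg fun i hi =>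
      mul_nonneg (pow_nonneg (hu i hi) _) (hw i hi)).1
        (by rw [← hNM, ← hN0, zero_pow (by omega)])
    rw [← hN0, zero_pow hm]
    refine le_of_eq (sum_eq_zero fun i hi => ?_)
    rcases mul_eq_zero.1 (hzero i hi) with h | h
    · rw [pow_eq_zero_iff (by omega) |>.1 h, zero_pow hm]; ring
    · rw [h, zero_mul]
  have hs : (0 : ℝ) < m + j := by positivity
  refine le_of_mul_le_mul_left ?_ hs
  calc (m + j : ℝ) * ∑ i ∈ t, w i * (u i ^ m * v i ^ j)
      = ∑ i ∈ t, w i * N ^ m * ((m + j : ℝ) * ((u i / N) ^ m * v i ^ j)) := by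
        rw [mul_sum]; refine sum_congr rfl fun i _ => ?_
        rw [div_pow]; field_simp
    _ ≤ ∑ i ∈ t, w i * N ^ m * (m * (u i / N) ^ (m + j) + j * v i ^ (m + j)) := by
        gcongr with i hi
        · exact mul_nonneg (hw i hi) (by positivity)
        · exact add_mul_pow_mul_pow_le (div_nonneg (hu i hi) hN0.le) (hv i hi) m j
    _ = N ^ m * (m * ((∑ i ∈ t, u i ^ (m + j) * w i) / N ^ (m + j))
          + j * ∑ i ∈ t, w i * v i ^ (m + j)) := by
        simp only [mul_add, sum_add_distrib, mul_sum, sum_div, div_pow]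
        congr 1 <;> refine sum_congr rfl fun i _ => by ring
    _ ≤ N ^ m * (m * 1 + j * 1) := by
        rw [← hNM, div_self (by positivity)]; gcongr
    _ = (m + j : ℝ) * N ^ m := by ring

theorem mul_prod_le_sum_pow_of_recurrence {I N R : ℕ → ℝ} {p : ℕ} (hI0 : I 0 ≤ 1)
    (hI : ∀ j, 0 ≤ I j) (hN : ∀ t, 0 ≤ N t)
    (hR : ∀ t ∈ Finset.Icc 1 p, R t ∈ Set.Icc 0 1)
    (hrec : ∀ s ∈ Finset.Icc 1 p,
      I s ≤ ∑ j ∈ range s, s.choose j * N s ^ (s - j) * I j + R s * I s) :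
    ∀ m ≤ p, ∀ j ≤ m,
      I j * ∏ t ∈ Finset.Icc 1 m, (1 - R t) ≤ (∑ t ∈ Finset.Icc 1 m, N t) ^ j := by
  intro m
  induction m with
  | zero => intro _ j hj; simpa [Nat.le_zero.1 hj] using hI0
  | succ m ih =>
    intro hmp j hj
    set P := ∏ t ∈ Finset.Icc 1 m, (1 - R t)
    set T := ∑ t ∈ Finset.Icc 1 m, N t
    have hP : 0 ≤ P := prod_nonneg fun t ht => by
      have := (hR t (Finset.Icc_subset_Icc_right (by omega) ht)).2; linarith
    have hT : 0 ≤ T := sum_nonneg fun t _ => hN t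
    obtain ⟨hR0, hR1⟩ := hR (m + 1) (by simp; omega)
    rw [sum_Icc_succ_top (by omega), prod_Icc_succ_top (by omega), ← mul_assoc]
    rcases Nat.lt_succ_iff_lt_or_eq.1 (Nat.lt_succ_of_le hj) with hjm | rfl
    · calc I j * P * (1 - R (m + 1)) ≤ I j * P :=
            mul_le_of_le_one_right (mul_nonneg (hI j) hP) (by linarith)
        _ ≤ T ^ j := ih (by omega) j (by omega)
        _ ≤ _ := pow_le_pow_left₀ hT (le_add_of_nonneg_right (hN _)) j
    · have hstep : (1 - R (m + 1)) * I (m + 1) ≤ ∑ j ∈ range (m + 1),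
          (m + 1).choose j * N (m + 1) ^ (m + 1 - j) * I j := by
        linarith [hrec (m + 1) (by simp; omega)]
      calc I (m + 1) * P * (1 - R (m + 1)) = (1 - R (m + 1)) * I (m + 1) * P := by ring
        _ ≤ ∑ j ∈ range (m + 1), (m + 1).choose j * N (m + 1) ^ (m + 1 - j) * (I j * P) := by
            simpa only [sum_mul, mul_assoc] using mul_le_mul_of_nonneg_right hstep hP
        _ ≤ ∑ j ∈ range (m + 1), (m + 1).choose j * N (m + 1) ^ (m + 1 - j) * T ^ j := by
            gcongr with j hj
            · exact mul_nonneg (by positivity) (pow_nonneg (hN _) _)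
            · exact ih (by omega) j (by simp at hj; omega)
        _ ≤ (T + N (m + 1)) ^ (m + 1) := by
            rw [add_pow, sum_range_succ _ (m + 1)]
            refine le_add_of_le_of_nonneg (le_of_eq (sum_congr rfl fun j _ => by ring)) ?_
            simpa using pow_nonneg hT (m + 1)

theorem rpow_one_div_le_div_rpow_of_mul_le {x y z : ℝ} {p : ℕ} (hx : 0 ≤ x) (hy : 0 < y)
    (hz : 0 ≤ z) (hp : p ≠ 0) (h : x * y ≤ z ^ p) :
    x ^ ((1 : ℝ) / p) ≤ z / y ^ ((1 : ℝ) / p) := by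
  rw [le_div_iff₀ (by positivity), ← Real.mul_rpow hx hy.le]
  calc (x * y) ^ ((1 : ℝ) / p) ≤ (z ^ p) ^ ((1 : ℝ) / p) := by gcongr
    _ = z := by rw [one_div, Real.pow_rpow_inv_natCast hz hp]

theorem MeasureTheory.Integrable.abs_pow_of_le {X : Type*} [MeasurableSpace X] {μ : Measure X}
    [IsFiniteMeasure μ] {f : X → ℝ} (hf : AEStronglyMeasurable f μ) {p j : ℕ}
    (hp : Integrable (fun x => |f x| ^ p) μ) (hj : j ≤ p) :
    Integrable (fun x => |f x| ^ j) μ := by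
  refine ((integrable_const 1).add hp).mono'
    ((continuous_abs.comp_aestronglyMeasurable hf).pow j) (ae_of_all _ fun x => ?_)
  rw [Real.norm_of_nonneg (by positivity), Pi.add_apply]
  rcases le_total |f x| 1 with h | h
  · linarith [pow_le_one₀ (abs_nonneg (f x)) h (n := j), pow_nonneg (abs_nonneg (f x)) p]
  · linarith [pow_le_pow_right₀ h hj]

theorem setIntegral_Ioo_comp_sub_div (g : ℝ → ℝ) (b : ℝ) {a : ℝ} (ha : 0 < a) :
    ∫ x in Ioo b (b + a), g ((x - b) / a) = a * ∫ t in Ioo 0 1, g t := by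
  rw [← integral_Ioc_eq_integral_Ioo, ← integral_Ioc_eq_integral_Ioo,
    ← intervalIntegral.integral_of_le (by linarith),
    ← intervalIntegral.integral_of_le zero_le_one]
  simp_rw [sub_div]
  rw [intervalIntegral.integral_comp_div_sub _ ha.ne', smul_eq_mul, sub_self, add_div,
    div_self ha.ne', add_sub_cancel_left]

theorem setIntegral_Ioo_eq_sum {g : ℝ → ℝ} {x : ℕ → ℝ} {n : ℕ}
    (hx : MonotoneOn x (Set.Iic n))
    (hg : IntegrableOn g (Ioo (x 0) (x n))) :
    ∫ t in Ioo (x 0) (x n), g t = ∑ k ∈ range n, ∫ t in Ioo (x k) (x (k + 1)), g t := by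
  have hle : ∀ k < n, x k ≤ x (k + 1) := fun k hk =>
    hx (mem_Iic.2 hk.le) (mem_Iic.2 hk) k.le_succ
  rw [← integral_Ioc_eq_integral_Ioo, ← intervalIntegral.integral_of_le
    (hx (mem_Iic.2 n.zero_le) (Set.mem_Iic.2 le_rfl) n.zero_le),
    ← intervalIntegral.sum_integral_adjacent_intervals]
  · refine sum_congr rfl fun k hk => ?_
    rw [intervalIntegral.integral_of_le (hle k (Finset.mem_range.1 hk)),
      integral_Ioc_eq_integral_Ioo]
  · intro k hk
    rw [intervalIntegrable_iff_integrableOn_Ioc_of_le (hle k hk)]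
    refine ((integrableOn_Ioc_iff_integrableOn_Ioo enorm_ne_top).2 hg).mono_set
      (Ioc_subset_Ioc (hx (mem_Iic.2 n.zero_le) (mem_Iic.2 hk.le) k.zero_le)
        (hx (mem_Iic.2 hk) (Set.mem_Iic.2 le_rfl) hk))

theorem setIntegral_abs_add_mul_pow_le {f : ℝ → ℝ} (β c d : ℝ) {s : ℕ}
    (hf : ∀ j ≤ s, IntegrableOn (fun t => |f t| ^ j) (Ioo 0 1)) :
    ∫ t in Ioo 0 1, |β + c * t + d * f t| ^ s
      ≤ ∑ j ∈ range (s + 1), s.choose j * ((|c| + |β|) ^ (s - j) * |d| ^ j)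
          * ∫ t in Ioo 0 1, |f t| ^ j := by
  have hexpand : ∀ t, (|c| + |β| + |d| * |f t|) ^ s = ∑ j ∈ range (s + 1),
      s.choose j * ((|c| + |β|) ^ (s - j) * |d| ^ j) * |f t| ^ j := fun t => by
    rw [add_comm, add_pow]
    exact sum_congr rfl fun j _ => by ring
  have hint : ∀ j ∈ range (s + 1), IntegrableOn
      (fun t => s.choose j * ((|c| + |β|) ^ (s - j) * |d| ^ j) * |f t| ^ j) (Ioo 0 1) :=
    fun j hj => (hf j (Nat.lt_succ_iff.1 (Finset.mem_range.1 hj))).const_mul _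
  simp_rw [← integral_const_mul, ← integral_finsetSum _ hint, ← hexpand]
  refine integral_mono_of_nonneg (ae_of_all _ fun t => by positivity)
    (by simpa only [hexpand] using integrable_finsetSum _ hint) ?_
  filter_upwards [ae_restrict_mem measurableSet_Ioo] with t ht
  have hbound : |β + c * t + d * f t| ≤ |c| + |β| + |d| * |f t| := by
    have : |c * t| ≤ |c| := by
      rw [abs_mul, abs_of_pos ht.1]; exact mul_le_of_le_one_right (abs_nonneg c) ht.2.le
    calc |β + c * t + d * f t| ≤ |β| + |c * t| + |d * f t| := abs_add_three _ _ _
      _ ≤ _ := by rw [abs_mul d]; linarith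
  exact pow_le_pow_left₀ (abs_nonneg _) hbound s

section SelfSimilar

variable {n : ℕ} {a c d β α : ℕ → ℝ} {f : ℝ → ℝ}

theorem eq_sum_range_of_add (hα0 : α 0 = 0) (hα : ∀ k, α (k + 1) = α k + a k) (k : ℕ) :
    α k = ∑ i ∈ range k, a i := by
  induction k with
  | zero => simpa using hα0
  | succ k ih => rw [hα, ih, sum_range_succ]

theorem setIntegral_abs_pow_eq_sum_of_fixed (ha : ∀ k < n, 0 < a k)
    (hsum : ∑ k ∈ range n, a k = 1) (hα0 : α 0 = 0) (hα : ∀ k, α (k + 1) = α k + a k)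
    (hfix : ∀ k < n, ∀ᵐ x ∂(volume.restrict (Ioo (α k) (α (k + 1)))),
      f x = β k + c k * ((x - α k) / a k) + d k * f ((x - α k) / a k))
    {s : ℕ} (hs : IntegrableOn (fun t => |f t| ^ s) (Ioo 0 1)) :
    ∫ x in Ioo 0 1, |f x| ^ s
      = ∑ k ∈ range n, a k * ∫ t in Ioo 0 1, |β k + c k * t + d k * f t| ^ s := by
  have hmono : MonotoneOn α (Set.Iic n) := monotoneOn_of_le_succ ordConnected_Iic
    fun k _ _ hk => by
      rw [Order.succ_eq_add_one, hα]
      exact le_add_of_nonneg_right (ha k (Set.mem_Iic.1 hk)).le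
  have hαn : α n = 1 := by rw [eq_sum_range_of_add hα0 hα, hsum]
  have hsplit := setIntegral_Ioo_eq_sum hmono (by rwa [hα0, hαn])
  rw [hα0, hαn] at hsplit
  rw [hsplit]
  refine sum_congr rfl fun k hk => ?_
  have hk := Finset.mem_range.1 hk
  rw [integral_congr_ae ((hfix k hk).mono fun x hx => by rw [hx]), hα,
    setIntegral_Ioo_comp_sub_div (fun t => |β k + c k * t + d k * f t| ^ s) _ (ha k hk)]

theorem setIntegral_abs_pow_le_of_fixed (ha : ∀ k < n, 0 < a k)
    (hsum : ∑ k ∈ range n, a k = 1) (hα0 : α 0 = 0) (hα : ∀ k, α (k + 1) = α k + a k)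
    (hfix : ∀ k < n, ∀ᵐ x ∂(volume.restrict (Ioo (α k) (α (k + 1)))),
      f x = β k + c k * ((x - α k) / a k) + d k * f ((x - α k) / a k))
    {s : ℕ} (hint : ∀ j ≤ s, IntegrableOn (fun t => |f t| ^ j) (Ioo 0 1))
    (hr : ∑ k ∈ range n, a k * |d k| ^ s ≤ 1) :
    ∫ x in Ioo 0 1, |f x| ^ s
      ≤ ∑ j ∈ range s, s.choose j
            * ((∑ k ∈ range n, (|c k| + |β k|) ^ s * a k) ^ ((1 : ℝ) / s)) ^ (s - j)
            * (∫ x in Ioo 0 1, |f x| ^ j)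
        + (∑ k ∈ range n, a k * |d k| ^ s) * ∫ x in Ioo 0 1, |f x| ^ s := by
  calc ∫ x in Ioo 0 1, |f x| ^ s
      = ∑ k ∈ range n, a k * ∫ t in Ioo 0 1, |β k + c k * t + d k * f t| ^ s :=
        setIntegral_abs_pow_eq_sum_of_fixed ha hsum hα0 hα hfix (hint s le_rfl)
    _ ≤ ∑ k ∈ range n, a k * ∑ j ∈ range (s + 1), s.choose j
          * ((|c k| + |β k|) ^ (s - j) * |d k| ^ j) * ∫ t in Ioo 0 1, |f t| ^ j := by
        gcongr with k hk
        · exact (ha k (Finset.mem_range.1 hk)).le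
        · exact setIntegral_abs_add_mul_pow_le _ _ _ hint
    _ = ∑ j ∈ range (s + 1), s.choose j
          * (∑ k ∈ range n, a k * ((|c k| + |β k|) ^ (s - j) * |d k| ^ j))
          * ∫ t in Ioo 0 1, |f t| ^ j := by
        simp only [mul_sum, sum_mul]
        rw [sum_comm]
        exact sum_congr rfl fun j _ => sum_congr rfl fun k _ => by ring
    _ ≤ _ := by
        rw [sum_range_succ]
        refine add_le_add (sum_le_sum fun j hj => ?_) (le_of_eq (by simp))
        refine mul_le_mul_of_nonneg_right (mul_le_mul_of_nonneg_left ?_ (Nat.cast_nonneg _))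
          (setIntegral_nonneg measurableSet_Ioo fun x _ => by positivity)
        exact sum_mul_pow_mul_pow_le _ (fun k hk => (ha k (Finset.mem_range.1 hk)).le)
          (fun k _ => by positivity) (fun k _ => abs_nonneg _) (Finset.mem_range.1 hj) hr

end SelfSimilar

theorem stmt_5_general (n : ℕ) (a c d β : ℕ → ℝ)
    (ha : ∀ k < n, 0 < a k) (hsum : ∑ k ∈ Finset.range n, a k = 1)
    (p : ℕ) (hp : 0 < p)
    (α : ℕ → ℝ) (hα0 : α 0 = 0) (hα : ∀ k, α (k + 1) = α k + a k)
    (hr : ∀ s ∈ Finset.Icc 1 p, ∑ k ∈ Finset.range n, a k * |d k| ^ (s : ℕ) < 1)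
    (f : ℝ → ℝ) (hmeas : Measurable f)
    (hf : IntegrableOn (fun t => |f t| ^ (p : ℕ)) (Set.Ioo 0 1))
    (hfix : ∀ k < n, ∀ᵐ x ∂(volume.restrict (Set.Ioo (α k) (α (k + 1)))),
      f x = β k + c k * ((x - α k) / a k) + d k * f ((x - α k) / a k)) :
    (∫ x in Set.Ioo (0:ℝ) 1, |f x| ^ (p : ℕ)) ^ ((1 : ℝ) / p)
      ≤ (∑ s ∈ Finset.Icc 1 p,
            (∑ k ∈ Finset.range n, (|c k| + |β k|) ^ (s : ℕ) * a k) ^ ((1 : ℝ) / s))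
        / (∏ s ∈ Finset.Icc 1 p,
            (1 - ∑ k ∈ Finset.range n, a k * |d k| ^ (s : ℕ))) ^ ((1 : ℝ) / p) := by
  have hint : ∀ j ≤ p, IntegrableOn (fun t => |f t| ^ j) (Ioo 0 1) := fun j hj =>
    hf.abs_pow_of_le hmeas.aestronglyMeasurable hj
  have ha0 : ∀ k ∈ range n, 0 ≤ a k := fun k hk => (ha k (Finset.mem_range.1 hk)).le
  have hI : ∀ s : ℕ, 0 ≤ ∫ x in Ioo 0 1, |f x| ^ s := fun s =>
    setIntegral_nonneg measurableSet_Ioo fun x _ => by positivity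
  have hN : ∀ t : ℕ, 0 ≤ (∑ k ∈ range n, (|c k| + |β k|) ^ t * a k) ^ ((1 : ℝ) / t) :=
    fun t => Real.rpow_nonneg (sum_nonneg fun k hk => mul_nonneg (by positivity) (ha0 k hk)) _
  have hR : ∀ t ∈ Finset.Icc 1 p, ∑ k ∈ range n, a k * |d k| ^ t ∈ Set.Icc 0 1 :=
    fun t ht => ⟨sum_nonneg fun k hk => mul_nonneg (ha0 k hk) (by positivity), (hr t ht).le⟩
  have hbound := mul_prod_le_sum_pow_of_recurrence
    (I := fun s => ∫ x in Ioo 0 1, |f x| ^ s)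
    (N := fun t => (∑ k ∈ range n, (|c k| + |β k|) ^ t * a k) ^ ((1 : ℝ) / t))
    (R := fun t => ∑ k ∈ range n, a k * |d k| ^ t) (by simp) hI hN hR
    (fun s hs => setIntegral_abs_pow_le_of_fixed ha hsum hα0 hα hfix
      (fun j hj => hint j (hj.trans (Finset.mem_Icc.1 hs).2)) (hr s hs).le)
    p le_rfl p le_rfl
  exact rpow_one_div_le_div_rpow_of_mul_le (hI p) (prod_pos fun t ht => sub_pos.2 (hr t ht))
    (sum_nonneg fun t _ => hN t) hp.ne' hbound

/-- Bound on the `L_p` norm (`p` a positive integer) of a self-similar function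
through the self-similarity parameters:
`‖f‖_p ≤ (∑_{s=1}^p ‖{c,β}‖_{s,a}) / (∏_{s=1}^p (1 - r_s))^{1/p}`. -/
theorem stmt_5 (n : ℕ) (hn : 1 < n) (a c d β : ℕ → ℝ)
    (ha : ∀ k < n, 0 < a k) (hsum : ∑ k ∈ Finset.range n, a k = 1)
    (p : ℕ) (hp : 0 < p)
    (α : ℕ → ℝ) (hα0 : α 0 = 0) (hα : ∀ k, α (k + 1) = α k + a k)
    (hr : ∀ s ∈ Finset.Icc 1 p, ∑ k ∈ Finset.range n, a k * |d k| ^ (s : ℕ) < 1)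
    (f : ℝ → ℝ) (hmeas : Measurable f)
    (hf : IntegrableOn (fun t => |f t| ^ (p : ℕ)) (Set.Ioo 0 1))
    (hfix : ∀ k < n, ∀ᵐ x ∂(volume.restrict (Set.Ioo (α k) (α (k + 1)))),
      f x = β k + c k * ((x - α k) / a k) + d k * f ((x - α k) / a k)) :
    (∫ x in Set.Ioo (0:ℝ) 1, |f x| ^ (p : ℕ)) ^ ((1 : ℝ) / p)
      ≤ (∑ s ∈ Finset.Icc 1 p,
            (∑ k ∈ Finset.range n, (|c k| + |β k|) ^ (s : ℕ) * a k) ^ ((1 : ℝ) / s))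
        / (∏ s ∈ Finset.Icc 1 p,
            (1 - ∑ k ∈ Finset.range n, a k * |d k| ^ (s : ℕ))) ^ ((1 : ℝ) / p) :=
  stmt_5_general n a c d β ha hsum p hp α hα0 hα hr f hmeas hf hfix
end

section
/- Let G and G' be two contracting similarity operators on L_p[0,1] (1 ≤ p < ∞) sharing the same partition parameters {a_k} but with parameters (c_k, d_k, β_k) and (c'_k, d'_k, β'_k), both satisfying r_p = ∑ a_k|d_k|^p < 1 and r'_p = ∑ a_k|d'_k|^p < 1, with fixed points f and g respectively. Then ‖f - g‖_{L_p[0,1]} ≤ [2^p ‖{c-c', β-β'}‖_{p,a} + 2^{p-1} (∑_{k=1}^n a_k|d_k - d'_k|^p)^{1/p} (‖f‖_{L_p} + ‖g‖_{L_p})] / (2 - r_p^{1/p} - (r'_p)^{1/p}). In particular, the fixed point depends continuously on the parameters (c_k, d_k, β_k). -/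
/-!
Put `u = f - g`. Subtracting the two fixed-point equations, on the `k`-th piece
`u = (β_k - β'_k) + (c_k - c'_k) t + d_k u(t) + (d_k - d'_k) g(t)` with `t = (x - α_k) / a_k`.
Rescaling the piece onto `(0, 1)` costs a factor `a_k`, so Minkowski in `L^p(0, 1)` on each piece
followed by Minkowski in `ℓ^p` with weights `a_k` gives `‖u‖ ≤ A + r_p^{1/p} ‖u‖ + D ‖g‖`, where
`A = ‖{c - c', β - β'}‖_{p,a}` and `D = (∑ a_k |d_k - d'_k|^p)^{1/p}`.
Writing instead `d f - d' g = d' u + (d - d') f` gives `‖u‖ ≤ A + r'_p^{1/p} ‖u‖ + D ‖f‖`.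
Since `f, g ∈ L^p`, `‖u‖` is finite, so adding the two inequalities and dividing by
`2 - r_p^{1/p} - r'_p^{1/p} > 0` yields the bound.
-/

open MeasureTheory Set Finset
open scoped ENNReal

lemma lintegral_Ioo_le_sum_lintegral_Ioo (α : ℕ → ℝ) (n : ℕ) (F : ℝ → ℝ≥0∞) :
    ∫⁻ x in Ioo (α 0) (α n), F x ≤ ∑ k ∈ range n, ∫⁻ x in Ioo (α k) (α (k + 1)), F x := by
  induction n with
  | zero => simp
  | succ n ih =>
    have hcover : Ioo (α 0) (α (n + 1)) ⊆ Ioo (α 0) (α n) ∪ Ico (α n) (α (n + 1)) := by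
      intro x hx
      rcases lt_or_ge x (α n) with h | h
      · exact Or.inl ⟨hx.1, h⟩
      · exact Or.inr ⟨h, hx.2⟩
    calc ∫⁻ x in Ioo (α 0) (α (n + 1)), F x
        ≤ ∫⁻ x in Ioo (α 0) (α n) ∪ Ico (α n) (α (n + 1)), F x := lintegral_mono_set hcover
      _ ≤ (∫⁻ x in Ioo (α 0) (α n), F x) + ∫⁻ x in Ico (α n) (α (n + 1)), F x :=
        lintegral_union_le _ _ _
      _ ≤ _ := by
        rw [sum_range_succ, setLIntegral_congr Ioo_ae_eq_Ico.symm]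
        gcongr

lemma lintegral_Ioo_comp_sub_div {α s : ℝ} (hs : 0 < s) (F : ℝ → ℝ≥0∞) :
    ∫⁻ x in Ioo α (α + s), F ((x - α) / s) = ENNReal.ofReal s * ∫⁻ t in Ioo 0 1, F t := by
  have himage : (fun t => s * t + α) '' Ioo 0 1 = Ioo α (α + s) := by
    rw [image_affine_Ioo hs]; simp [add_comm]
  have hderiv (t : ℝ) : HasDerivAt (fun t => s * t + α) s t := by
    simpa using ((hasDerivAt_id t).const_mul s).add_const α
  rw [← himage, lintegral_image_eq_lintegral_abs_deriv_mul measurableSet_Ioo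
    (fun t _ => (hderiv t).hasDerivWithinAt)
    (fun x _ y _ h => by simpa [hs.ne'] using h)]
  simp [abs_of_pos hs, hs.ne', lintegral_const_mul']

section RealLp

variable {Ω : Type*} [MeasurableSpace Ω] {μ : Measure Ω} {p : ℝ}

lemma lintegral_enorm_rpow_eq_eLpNorm_rpow (hp : 0 < p) (u : Ω → ℝ) :
    ∫⁻ x, ‖u x‖ₑ ^ p ∂μ = eLpNorm u (ENNReal.ofReal p) μ ^ p := by
  rw [eLpNorm_eq_eLpNorm' (by simpa using hp) ENNReal.ofReal_ne_top,
    ENNReal.toReal_ofReal hp.le, lintegral_rpow_enorm_eq_rpow_eLpNorm' hp]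

lemma lpNorm_ofReal_eq_integral_abs_rpow (hp : 0 < p) {u : Ω → ℝ}
    (hu : AEStronglyMeasurable u μ) :
    lpNorm u (ENNReal.ofReal p) μ = (∫ x, |u x| ^ p ∂μ) ^ (1 / p) := by
  rw [lpNorm_eq_integral_norm_rpow_toReal (by simpa using hp) ENNReal.ofReal_ne_top hu,
    ENNReal.toReal_ofReal hp.le, one_div]
  simp only [Real.norm_eq_abs]

lemma memLp_ofReal_of_integrable_abs_rpow (hp : 0 < p) {u : Ω → ℝ}
    (hu : AEStronglyMeasurable u μ) (hint : Integrable (fun x => |u x| ^ p) μ) :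
    MemLp u (ENNReal.ofReal p) μ :=
  (integrable_norm_rpow_iff hu (by simpa using hp) ENNReal.ofReal_ne_top).1
    (by simpa [ENNReal.toReal_ofReal hp.le] using hint)

end RealLp

lemma eLpNorm_affine_Ioo_zero_one_le (p : ℝ≥0∞) (b c : ℝ) :
    eLpNorm (fun t => b + c * t) p (volume.restrict (Ioo 0 1)) ≤ ENNReal.ofReal (|b| + |c|) := by
  refine (eLpNorm_le_of_ae_bound (C := |b| + |c|) ?_).trans_eq (by simp)
  filter_upwards [ae_restrict_mem measurableSet_Ioo] with t ht
  have ht1 : |t| ≤ 1 := abs_le.2 ⟨by linarith [ht.1], ht.2.le⟩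
  calc ‖b + c * t‖ ≤ |b| + |c| * |t| := by
        rw [Real.norm_eq_abs, ← abs_mul]; exact abs_add_le _ _
    _ ≤ |b| + |c| := by nlinarith [abs_nonneg c]

lemma lintegral_Ioo_enorm_rpow_le_of_ae_eq_affine {α s p b c d e : ℝ} (hs : 0 < s) (hp : 1 ≤ p)
    {u v w : ℝ → ℝ} (hv : AEStronglyMeasurable v (volume.restrict (Ioo 0 1)))
    (hw : AEStronglyMeasurable w (volume.restrict (Ioo 0 1)))
    (hu : ∀ᵐ x ∂volume.restrict (Ioo α (α + s)),
      u x = b + c * ((x - α) / s) + d * v ((x - α) / s) + e * w ((x - α) / s)) :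
    ∫⁻ x in Ioo α (α + s), ‖u x‖ₑ ^ p ≤ ENNReal.ofReal s *
      (ENNReal.ofReal (|b| + |c|) + ‖d‖ₑ * eLpNorm v (.ofReal p) (volume.restrict (Ioo 0 1))
        + ‖e‖ₑ * eLpNorm w (.ofReal p) (volume.restrict (Ioo 0 1))) ^ p := by
  have hq : 1 ≤ ENNReal.ofReal p := by simpa using hp
  set h : ℝ → ℝ := fun t => b + c * t + d * v t + e * w t
  have hnorm : eLpNorm h (.ofReal p) (volume.restrict (Ioo 0 1)) ≤ ENNReal.ofReal (|b| + |c|)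
      + ‖d‖ₑ * eLpNorm v (.ofReal p) (volume.restrict (Ioo 0 1))
      + ‖e‖ₑ * eLpNorm w (.ofReal p) (volume.restrict (Ioo 0 1)) := by
    have haff : AEStronglyMeasurable (fun t : ℝ => b + c * t) (volume.restrict (Ioo 0 1)) := by
      fun_prop
    calc eLpNorm ((fun t => b + c * t) + d • v + e • w) (.ofReal p) (volume.restrict (Ioo 0 1))
        ≤ eLpNorm ((fun t => b + c * t) + d • v) (.ofReal p) (volume.restrict (Ioo 0 1))
          + eLpNorm (e • w) (.ofReal p) (volume.restrict (Ioo 0 1)) :=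
          eLpNorm_add_le (haff.add (hv.const_smul d)) (hw.const_smul e) hq
      _ ≤ eLpNorm (fun t => b + c * t) (.ofReal p) (volume.restrict (Ioo 0 1))
          + eLpNorm (d • v) (.ofReal p) (volume.restrict (Ioo 0 1))
          + eLpNorm (e • w) (.ofReal p) (volume.restrict (Ioo 0 1)) := by
          gcongr; exact eLpNorm_add_le haff (hv.const_smul d) hq
      _ ≤ _ := by
          rw [eLpNorm_const_smul, eLpNorm_const_smul]
          gcongr
          exact eLpNorm_affine_Ioo_zero_one_le _ b c
  calc ∫⁻ x in Ioo α (α + s), ‖u x‖ₑ ^ p = ∫⁻ x in Ioo α (α + s), ‖h ((x - α) / s)‖ₑ ^ p :=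
        lintegral_congr_ae (hu.mono fun x hx => by dsimp only; rw [hx])
    _ = ENNReal.ofReal s * eLpNorm h (.ofReal p) (volume.restrict (Ioo 0 1)) ^ p := by
        rw [lintegral_Ioo_comp_sub_div hs (fun t => ‖h t‖ₑ ^ p),
          lintegral_enorm_rpow_eq_eLpNorm_rpow (by linarith)]
    _ ≤ _ := by gcongr

section WeightedLp

variable {ι : Type*} (s : Finset ι) {p : ℝ} {w : ι → ℝ}

lemma weighted_Lp_add_le (hp : 1 ≤ p) {x y : ι → ℝ}
    (hw : ∀ i ∈ s, 0 ≤ w i) (hx : ∀ i ∈ s, 0 ≤ x i) (hy : ∀ i ∈ s, 0 ≤ y i) :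
    (∑ i ∈ s, w i * (x i + y i) ^ p) ^ (1 / p)
      ≤ (∑ i ∈ s, w i * x i ^ p) ^ (1 / p) + (∑ i ∈ s, w i * y i ^ p) ^ (1 / p) := by
  have hweight : ∀ i ∈ s, ∀ z, 0 ≤ z → w i * z ^ p = (w i ^ (1 / p) * z) ^ p := by
    intro i hi z hz
    rw [Real.mul_rpow (Real.rpow_nonneg (hw i hi) _) hz, ← Real.rpow_mul (hw i hi),
      one_div_mul_cancel (by linarith), Real.rpow_one]
  have := Real.Lp_add_le_of_nonneg s (f := fun i => w i ^ (1 / p) * x i)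
    (g := fun i => w i ^ (1 / p) * y i) hp
    (fun i hi => mul_nonneg (Real.rpow_nonneg (hw i hi) _) (hx i hi))
    (fun i hi => mul_nonneg (Real.rpow_nonneg (hw i hi) _) (hy i hi))
  simp only [← mul_add] at this
  rwa [sum_congr rfl fun i hi => hweight i hi _ (add_nonneg (hx i hi) (hy i hi)),
    sum_congr rfl fun i hi => hweight i hi _ (hx i hi),
    sum_congr rfl fun i hi => hweight i hi _ (hy i hi)]

lemma weighted_Lp_mul_const (hp : 0 < p) {y : ι → ℝ}
    (hw : ∀ i ∈ s, 0 ≤ w i) (hy : ∀ i ∈ s, 0 ≤ y i) {N : ℝ} (hN : 0 ≤ N) :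
    (∑ i ∈ s, w i * (y i * N) ^ p) ^ (1 / p) = (∑ i ∈ s, w i * y i ^ p) ^ (1 / p) * N := by
  have hsum : ∑ i ∈ s, w i * (y i * N) ^ p = (∑ i ∈ s, w i * y i ^ p) * N ^ p := by
    rw [sum_mul]
    refine sum_congr rfl fun i hi => ?_
    rw [Real.mul_rpow (hy i hi) hN, mul_assoc]
  rw [hsum, Real.mul_rpow (sum_nonneg fun i hi => mul_nonneg (hw i hi)
      (Real.rpow_nonneg (hy i hi) _)) (Real.rpow_nonneg hN _), ← Real.rpow_mul hN,
    mul_one_div_cancel hp.ne', Real.rpow_one]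

lemma le_of_rpow_le_weighted_sum (hp : 1 ≤ p) {x y z : ι → ℝ} (hw : ∀ i ∈ s, 0 ≤ w i)
    (hx : ∀ i ∈ s, 0 ≤ x i) (hy : ∀ i ∈ s, 0 ≤ y i)
    (hz : ∀ i ∈ s, 0 ≤ z i) {N M : ℝ} (hN : 0 ≤ N) (hM : 0 ≤ M)
    (h : N ^ p ≤ ∑ i ∈ s, w i * (x i + y i * N + z i * M) ^ p) :
    N ≤ (∑ i ∈ s, w i * x i ^ p) ^ (1 / p) + (∑ i ∈ s, w i * y i ^ p) ^ (1 / p) * N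
      + (∑ i ∈ s, w i * z i ^ p) ^ (1 / p) * M := by
  have hp0 : 0 < p := by linarith
  have hyN : ∀ i ∈ s, 0 ≤ y i * N := fun i hi => mul_nonneg (hy i hi) hN
  have hzM : ∀ i ∈ s, 0 ≤ z i * M := fun i hi => mul_nonneg (hz i hi) hM
  calc N = (N ^ p) ^ (1 / p) := by
        rw [← Real.rpow_mul hN, mul_one_div_cancel hp0.ne', Real.rpow_one]
    _ ≤ (∑ i ∈ s, w i * (x i + y i * N + z i * M) ^ p) ^ (1 / p) :=
        Real.rpow_le_rpow (Real.rpow_nonneg hN _) h (by positivity)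
    _ ≤ (∑ i ∈ s, w i * (x i + y i * N) ^ p) ^ (1 / p)
          + (∑ i ∈ s, w i * (z i * M) ^ p) ^ (1 / p) :=
        weighted_Lp_add_le s hp hw (fun i hi => add_nonneg (hx i hi) (hyN i hi)) hzM
    _ ≤ (∑ i ∈ s, w i * x i ^ p) ^ (1 / p) + (∑ i ∈ s, w i * (y i * N) ^ p) ^ (1 / p)
          + (∑ i ∈ s, w i * (z i * M) ^ p) ^ (1 / p) := by
        gcongr
        exact weighted_Lp_add_le s hp hw hx hyN
    _ = _ := by rw [weighted_Lp_mul_const s hp0 hw hy hN, weighted_Lp_mul_const s hp0 hw hz hM]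

end WeightedLp

lemma lpNorm_le_of_ae_eq_piecewise_affine {n : ℕ} {a α b c d e : ℕ → ℝ}
    (ha : ∀ k < n, 0 < a k) (hα0 : α 0 = 0) (hαn : α n = 1) (hα : ∀ k, α (k + 1) = α k + a k)
    {p : ℝ} (hp : 1 ≤ p) {u v : ℝ → ℝ} (hu : MemLp u (.ofReal p) (volume.restrict (Ioo 0 1)))
    (hv : MemLp v (.ofReal p) (volume.restrict (Ioo 0 1)))
    (hpiece : ∀ k < n, ∀ᵐ x ∂volume.restrict (Ioo (α k) (α (k + 1))),
      u x = b k + c k * ((x - α k) / a k) + d k * u ((x - α k) / a k)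
        + e k * v ((x - α k) / a k)) :
    lpNorm u (.ofReal p) (volume.restrict (Ioo 0 1))
      ≤ (∑ k ∈ range n, (|c k| + |b k|) ^ p * a k) ^ (1 / p)
        + (∑ k ∈ range n, a k * |d k| ^ p) ^ (1 / p)
          * lpNorm u (.ofReal p) (volume.restrict (Ioo 0 1))
        + (∑ k ∈ range n, a k * |e k| ^ p) ^ (1 / p)
          * lpNorm v (.ofReal p) (volume.restrict (Ioo 0 1)) := by
  set N := lpNorm u (.ofReal p) (volume.restrict (Ioo 0 1))
  set M := lpNorm v (.ofReal p) (volume.restrict (Ioo 0 1))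
  have hN : 0 ≤ N := lpNorm_nonneg
  have hM : 0 ≤ M := lpNorm_nonneg
  have hp0 : 0 < p := by linarith
  have ha' : ∀ k ∈ range n, 0 ≤ a k := fun k hk => (ha k (mem_range.1 hk)).le
  have hpiece_le : ∀ k ∈ range n, ∫⁻ x in Ioo (α k) (α (k + 1)), ‖u x‖ₑ ^ p
      ≤ ENNReal.ofReal (a k * (|c k| + |b k| + |d k| * N + |e k| * M) ^ p) := by
    intro k hk
    have hk := mem_range.1 hk
    have hpiece_k := hpiece k hk
    rw [hα k] at hpiece_k ⊢
    refine (lintegral_Ioo_enorm_rpow_le_of_ae_eq_affine (ha k hk) hp hu.aestronglyMeasurable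
      hv.aestronglyMeasurable hpiece_k).trans_eq ?_
    rw [← ofReal_lpNorm hu, ← ofReal_lpNorm hv, Real.enorm_eq_ofReal_abs,
      Real.enorm_eq_ofReal_abs, ← ENNReal.ofReal_mul (abs_nonneg _),
      ← ENNReal.ofReal_mul (abs_nonneg _), ← ENNReal.ofReal_add (by positivity) (by positivity),
      ← ENNReal.ofReal_add (by positivity) (by positivity),
      ENNReal.ofReal_rpow_of_nonneg (by positivity) hp0.le,
      ← ENNReal.ofReal_mul (ha k hk).le, add_comm |b k|]
  have hNp : N ^ p ≤ ∑ k ∈ range n, a k * (|c k| + |b k| + |d k| * N + |e k| * M) ^ p := by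
    have hterm : ∀ k ∈ range n, 0 ≤ a k * (|c k| + |b k| + |d k| * N + |e k| * M) ^ p :=
      fun k hk => mul_nonneg (ha' k hk) (by positivity)
    rw [← ENNReal.ofReal_le_ofReal_iff (sum_nonneg hterm), ENNReal.ofReal_sum_of_nonneg hterm,
      ← ENNReal.ofReal_rpow_of_nonneg lpNorm_nonneg hp0.le, ofReal_lpNorm hu,
      ← lintegral_enorm_rpow_eq_eLpNorm_rpow hp0]
    calc ∫⁻ x in Ioo 0 1, ‖u x‖ₑ ^ p
        ≤ ∑ k ∈ range n, ∫⁻ x in Ioo (α k) (α (k + 1)), ‖u x‖ₑ ^ p := by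
          simpa only [hα0, hαn] using lintegral_Ioo_le_sum_lintegral_Ioo α n _
      _ ≤ _ := sum_le_sum hpiece_le
  have := le_of_rpow_le_weighted_sum (range n) hp ha'
    (fun k _ => add_nonneg (abs_nonneg (c k)) (abs_nonneg (b k)))
    (fun k _ => abs_nonneg (d k)) (fun k _ => abs_nonneg (e k)) hN hM hNp
  rwa [sum_congr rfl fun k _ => mul_comm (a k) ((|c k| + |b k|) ^ p)] at this

lemma le_div_of_le_add_mul_self {N A D F G R R' p : ℝ} (hp : 1 ≤ p) (hA : 0 ≤ A) (hD : 0 ≤ D)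
    (hF : 0 ≤ F) (hG : 0 ≤ G) (hR : R < 1) (hR' : R' < 1)
    (h : N ≤ A + R * N + D * G) (h' : N ≤ A + R' * N + D * F) :
    N ≤ (2 ^ p * A + 2 ^ (p - 1) * D * (F + G)) / (2 - R - R') := by
  rw [le_div_iff₀ (by linarith)]
  have h2p : (2 : ℝ) ≤ 2 ^ p := by
    simpa using Real.rpow_le_rpow_of_exponent_le one_le_two hp
  have h2p1 : (1 : ℝ) ≤ 2 ^ (p - 1) := Real.one_le_rpow one_le_two (by linarith)
  nlinarith [mul_le_mul_of_nonneg_right h2p hA,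
    mul_le_mul_of_nonneg_right h2p1 (mul_nonneg hD (add_nonneg hF hG))]

theorem stmt_10_general (n : ℕ) (a c d β c' d' β' : ℕ → ℝ)
    (ha : ∀ k < n, 0 < a k) (hsum : ∑ k ∈ Finset.range n, a k = 1)
    (α : ℕ → ℝ) (hα0 : α 0 = 0) (hα : ∀ k, α (k + 1) = α k + a k)
    (p : ℝ) (hp : 1 ≤ p)
    (hr : ∑ k ∈ Finset.range n, a k * |d k| ^ p < 1)
    (hr' : ∑ k ∈ Finset.range n, a k * |d' k| ^ p < 1)
    (f g : ℝ → ℝ) (hfm : Measurable f) (hgm : Measurable g)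
    (hf : IntegrableOn (fun t => |f t| ^ p) (Set.Ioo 0 1))
    (hg : IntegrableOn (fun t => |g t| ^ p) (Set.Ioo 0 1))
    (hfix : ∀ k < n, ∀ᵐ x ∂(volume.restrict (Set.Ioo (α k) (α (k + 1)))),
      f x = β k + c k * ((x - α k) / a k) + d k * f ((x - α k) / a k))
    (hfix' : ∀ k < n, ∀ᵐ x ∂(volume.restrict (Set.Ioo (α k) (α (k + 1)))),
      g x = β' k + c' k * ((x - α k) / a k) + d' k * g ((x - α k) / a k)) :
    (∫ t in Set.Ioo (0:ℝ) 1, |f t - g t| ^ p) ^ (1 / p)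
      ≤ ((2:ℝ) ^ p * (∑ k ∈ Finset.range n,
              (|c k - c' k| + |β k - β' k|) ^ p * a k) ^ (1 / p)
          + (2:ℝ) ^ (p - 1) * (∑ k ∈ Finset.range n, a k * |d k - d' k| ^ p) ^ (1 / p)
              * ((∫ t in Set.Ioo (0:ℝ) 1, |f t| ^ p) ^ (1 / p)
                  + (∫ t in Set.Ioo (0:ℝ) 1, |g t| ^ p) ^ (1 / p)))
        / (2 - (∑ k ∈ Finset.range n, a k * |d k| ^ p) ^ (1 / p)
             - (∑ k ∈ Finset.range n, a k * |d' k| ^ p) ^ (1 / p)) := by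
  have hp0 : 0 < p := by linarith
  have hαn : α n = 1 := (sum_range_induction a α hα0 n fun k _ => hα k).symm.trans hsum
  have hfL := memLp_ofReal_of_integrable_abs_rpow hp0 hfm.aestronglyMeasurable hf
  have hgL := memLp_ofReal_of_integrable_abs_rpow hp0 hgm.aestronglyMeasurable hg
  have hfgL : MemLp (fun t => f t - g t) _ _ := hfL.sub hgL
  have hweighted_nonneg (δ : ℕ → ℝ) : 0 ≤ ∑ k ∈ range n, a k * |δ k| ^ p :=
    sum_nonneg fun k hk => mul_nonneg (ha k (mem_range.1 hk)).le (by positivity)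
  have hroot_lt_one {δ : ℕ → ℝ} (h : ∑ k ∈ range n, a k * |δ k| ^ p < 1) :
      (∑ k ∈ range n, a k * |δ k| ^ p) ^ (1 / p) < 1 :=
    Real.rpow_lt_one (hweighted_nonneg δ) h (by positivity)
  have key := lpNorm_le_of_ae_eq_piecewise_affine ha hα0 hαn hα hp hfgL hgL
    (b := β - β') (c := c - c') (d := d) (e := d - d') fun k hk => by
      filter_upwards [hfix k hk, hfix' k hk] with x hfx hgx
      simp only [Pi.sub_apply]; rw [hfx, hgx]; ring
  have key' := lpNorm_le_of_ae_eq_piecewise_affine ha hα0 hαn hα hp hfgL hfL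
    (b := β - β') (c := c - c') (d := d') (e := d - d') fun k hk => by
      filter_upwards [hfix k hk, hfix' k hk] with x hfx hgx
      simp only [Pi.sub_apply]; rw [hfx, hgx]; ring
  rw [← lpNorm_ofReal_eq_integral_abs_rpow hp0 hfgL.aestronglyMeasurable,
    ← lpNorm_ofReal_eq_integral_abs_rpow hp0 hfL.aestronglyMeasurable,
    ← lpNorm_ofReal_eq_integral_abs_rpow hp0 hgL.aestronglyMeasurable]
  refine le_div_of_le_add_mul_self hp (Real.rpow_nonneg (sum_nonneg fun k hk =>
    mul_nonneg (by positivity) (ha k (mem_range.1 hk)).le) _)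
    (Real.rpow_nonneg (hweighted_nonneg _) _) lpNorm_nonneg lpNorm_nonneg
    (hroot_lt_one hr) (hroot_lt_one hr') key key'

/-- Continuous dependence of the fixed point on the parameters `c_k, d_k, β_k`:
an explicit bound on `‖f - g‖_p` for the fixed points of two similarity operators
sharing the same partition. -/
theorem stmt_10 (n : ℕ) (hn : 1 < n) (a c d β c' d' β' : ℕ → ℝ)
    (ha : ∀ k < n, 0 < a k) (hsum : ∑ k ∈ Finset.range n, a k = 1)
    (α : ℕ → ℝ) (hα0 : α 0 = 0) (hα : ∀ k, α (k + 1) = α k + a k)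
    (p : ℝ) (hp : 1 ≤ p)
    (hr : ∑ k ∈ Finset.range n, a k * |d k| ^ p < 1)
    (hr' : ∑ k ∈ Finset.range n, a k * |d' k| ^ p < 1)
    (f g : ℝ → ℝ) (hfm : Measurable f) (hgm : Measurable g)
    (hf : IntegrableOn (fun t => |f t| ^ p) (Set.Ioo 0 1))
    (hg : IntegrableOn (fun t => |g t| ^ p) (Set.Ioo 0 1))
    (hfix : ∀ k < n, ∀ᵐ x ∂(volume.restrict (Set.Ioo (α k) (α (k + 1)))),
      f x = β k + c k * ((x - α k) / a k) + d k * f ((x - α k) / a k))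
    (hfix' : ∀ k < n, ∀ᵐ x ∂(volume.restrict (Set.Ioo (α k) (α (k + 1)))),
      g x = β' k + c' k * ((x - α k) / a k) + d' k * g ((x - α k) / a k)) :
    (∫ t in Set.Ioo (0:ℝ) 1, |f t - g t| ^ p) ^ (1 / p)
      ≤ ((2:ℝ) ^ p * (∑ k ∈ Finset.range n,
              (|c k - c' k| + |β k - β' k|) ^ p * a k) ^ (1 / p)
          + (2:ℝ) ^ (p - 1) * (∑ k ∈ Finset.range n, a k * |d k - d' k| ^ p) ^ (1 / p)
              * ((∫ t in Set.Ioo (0:ℝ) 1, |f t| ^ p) ^ (1 / p)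
                  + (∫ t in Set.Ioo (0:ℝ) 1, |g t| ^ p) ^ (1 / p)))
        / (2 - (∑ k ∈ Finset.range n, a k * |d k| ^ p) ^ (1 / p)
             - (∑ k ∈ Finset.range n, a k * |d' k| ^ p) ^ (1 / p)) :=
  stmt_10_general n a c d β c' d' β' ha hsum α hα0 hα p hp hr hr' f g hfm hgm hf hg hfix hfix'
end

section
/- The conditions c_k + d_k ≥ 0 and β_k ≤ β_{k+1} are not sufficient for monotonicity: the continuous self-similar function f with parameters n = 3, a_1 = a_2 = a_3 = 1/3, c_1 = 0, d_1 = 1/2, β_1 = 0, c_2 = d, d_2 = -d, β_2 = 1/2, c_3 = 0, d_3 = 1/2, β_3 = 1/2 (for any fixed 0 < d < 1) satisfies f(1/3) = 1/2 and f(1/3 + 1/9) = 1/2 - d/6 < 1/2, hence f is not non-decreasing, even though β_1 ≤ β_2 ≤ β_3 and c_k + d_k ≥ 0 for all k. -/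
/-- The counterexample: the continuous self-similar function with parameters
`n = 3`, `a₁ = a₂ = a₃ = 1/3`, `c₁ = 0, d₁ = 1/2, β₁ = 0`,
`c₂ = d, d₂ = -d, β₂ = 1/2`, `c₃ = 0, d₃ = 1/2, β₃ = 1/2` satisfies
`f(1/3) = 1/2` and `f(1/3 + 1/9) = 1/2 - d/6 < 1/2`, hence it is not
non-decreasing, even though `β₁ ≤ β₂ ≤ β₃` and `c_k + d_k ≥ 0`. -/
theorem stmt_15 (d : ℝ) (hd0 : 0 < d) (hd1 : d < 1)
    (f : ℝ → ℝ) (hcont : ContinuousOn f (Set.Icc 0 1))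
    (hf0 : f 0 = 0) (hf1 : f 1 = 1)
    (hfix1 : ∀ x ∈ Set.Icc (0:ℝ) 1, f (x / 3) = (1 / 2) * f x)
    (hfix2 : ∀ x ∈ Set.Icc (0:ℝ) 1, f ((x + 1) / 3) = d * x - d * f x + 1 / 2)
    (hfix3 : ∀ x ∈ Set.Icc (0:ℝ) 1, f ((x + 2) / 3) = (1 / 2) * f x + 1 / 2) :
    f (1 / 3) = 1 / 2
    ∧ f (1 / 3 + 1 / 9) = 1 / 2 - d / 6
    ∧ f (1 / 3 + 1 / 9) < 1 / 2
    ∧ ¬ MonotoneOn f (Set.Icc 0 1) := by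
  have h13 : f (1 / 3) = 1 / 2 := by
    have := hfix2 0 (by norm_num)
    simpa [hf0] using this
  have h49 : f (1 / 3 + 1 / 9) = 1 / 2 - d / 6 := by
    have := hfix2 (1/3) (by norm_num)
    rw [h13] at this
    norm_num at this
    rw [show (1/3 + 1/9 : ℝ) = 4/9 by norm_num, this]
    ring
  refine ⟨h13, h49, by linarith, ?_⟩
  intro hmono
  have := hmono (a := 1/3) (b := 1/3 + 1/9) (by norm_num) (by norm_num) (by norm_num)
  rw [h13, h49] at this
  linarith
end

section
/- Let f: [0,1] → ℝ be a continuous self-similar function with f(0) = 0, f(1) = 1, parameters c_k = 0 for all k, so that β_1 = 0, β_{k+1} - β_k = d_k, ∑_{k=1}^n d_k = 1, max_k |d_k| < 1. Let D = ∑_{k=1}^n |d_k|. Then f has bounded variation on [0,1] if and only if D ≤ 1 (equivalently D = 1), and in fact the total variation of f equals lim_{m→∞} D^m. -/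
/-!
Cutting `[0, 1]` at the points `α k` and rescaling each piece by the self-similarity gives
`V = D * V` for the total variation `V`, while `V ≥ |f 1 - f 0| = 1` and `D ≥ ∑ d k = 1`.
If `D > 1` this forces `V = ∞`. If `D = 1`, every `d k` is nonnegative and `f` is monotone:
a positive maximum of `-f`, of `f - 1`, or of `f x - f y` over `x ≤ y` would reappear inside a
single piece scaled down by `d k < 1` (once `0 ≤ f ≤ 1`, pairs in different pieces are already
in order). Hence `V = f 1 - f 0 = 1`.
-/

open Finset Filter
open scoped ENNReal

theorem eq_add_sum_Icc_of_succ_eq_add {M : Type*} [AddCommGroup M] {u v : ℕ → M} {m n : ℕ}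
    (hmn : m ≤ n + 1) (h : ∀ k, m ≤ k → u (k + 1) = u k + v k) :
    u (n + 1) = u m + ∑ k ∈ Icc m n, v k := by
  rw [← Finset.Ico_add_one_right_eq_Icc, ← sub_eq_iff_eq_add', ← Finset.sum_Ico_sub u hmn]
  refine Finset.sum_congr rfl fun k hk => ?_
  rw [h k (Finset.mem_Ico.mp hk).1, add_sub_cancel_left]

theorem monotoneOn_Icc_of_succ_eq_add {u v : ℕ → ℝ} {m n : ℕ}
    (h : ∀ k, m ≤ k → u (k + 1) = u k + v k) (hv : ∀ k, m ≤ k → k ≤ n → 0 ≤ v k) :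
    MonotoneOn u (Set.Icc m (n + 1)) := by
  refine monotoneOn_of_le_succ Set.ordConnected_Icc fun k _ hk hk' => ?_
  rw [Order.succ_eq_add_one] at hk' ⊢
  rw [h k hk.1]
  linarith [hv k hk.1 (Nat.le_of_succ_le_succ hk'.2)]

theorem exists_mem_Icc_succ_of_mem_Icc {α : Type*} [LinearOrder α] {u : ℕ → α} {m n : ℕ}
    (hmn : m < n) {x : α} (hx : x ∈ Set.Icc (u m) (u n)) :
    ∃ k, m ≤ k ∧ k < n ∧ x ∈ Set.Icc (u k) (u (k + 1)) := by
  induction n, hmn using Nat.le_induction with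
  | base => exact ⟨m, le_rfl, m.lt_succ_self, hx⟩
  | succ n hmn ih =>
    by_cases hxn : x ≤ u n
    · obtain ⟨k, hmk, hkn, hk⟩ := ih ⟨hx.1, hxn⟩
      exact ⟨k, hmk, hkn.trans n.lt_succ_self, hk⟩
    · exact ⟨n, by omega, n.lt_succ_self, le_of_not_ge hxn, hx.2⟩

theorem image_mul_add_Icc_zero_one {a : ℝ} (ha : 0 < a) (b : ℝ) :
    (a * · + b) '' Set.Icc 0 1 = Set.Icc b (b + a) := by
  rw [Set.image_affine_Icc' ha, mul_zero, zero_add, mul_one, add_comm]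

theorem IsCompact.forall_nonpos_of_le_mul {X : Type*} [TopologicalSpace X] {S : Set X}
    (hS : IsCompact S) {h : X → ℝ} (hh : ContinuousOn h S)
    (hle : ∀ p ∈ S, ∃ c < 1, 0 ≤ c ∧ ∃ q ∈ S, h p ≤ c * h q) :
    ∀ p ∈ S, h p ≤ 0 := by
  intro p hp
  obtain ⟨p₀, hp₀, hmax⟩ := hS.exists_isMaxOn ⟨p, hp⟩ hh
  obtain ⟨c, hc1, hc0, q, hq, hp₀q⟩ := hle p₀ hp₀
  have hqp₀ : h q ≤ h p₀ := hmax hq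
  have hp₀_nonpos : h p₀ ≤ 0 := by nlinarith
  exact (hmax hp).trans hp₀_nonpos

theorem ENNReal.eq_top_of_eq_mul_self {x c : ℝ≥0∞} (h : x = c * x) (hc : 1 < c) (hx : x ≠ 0) :
    x = ⊤ := by
  by_contra hx'
  have h' : x * 1 = x * c := by rw [mul_one, mul_comm]; exact h
  exact hc.ne ((ENNReal.mul_right_inj hx hx').mp h')

theorem nonneg_of_sum_abs_le_sum {ι : Type*} {s : Finset ι} {d : ι → ℝ}
    (h : ∑ i ∈ s, |d i| ≤ ∑ i ∈ s, d i) {i : ι} (hi : i ∈ s) : 0 ≤ d i := by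
  have habs := (Finset.sum_eq_sum_iff_of_le fun i _ => le_abs_self (d i)).mp
    (le_antisymm (Finset.sum_le_sum fun i _ => le_abs_self (d i)) h) i hi
  exact abs_eq_self.mp habs.symm

theorem eVariationOn_const_mul_add {α : Type*} [LinearOrder α] (f : α → ℝ) (s : Set α) (c b : ℝ) :
    eVariationOn (fun x => c * f x + b) s = ENNReal.ofReal |c| * eVariationOn f s := by
  rw [eVariationOn, eVariationOn, ENNReal.mul_iSup]
  refine iSup_congr fun p => ?_
  rw [Finset.mul_sum]
  refine Finset.sum_congr rfl fun i _ => ?_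
  rw [edist_dist, edist_dist, Real.dist_eq, Real.dist_eq,
    ← ENNReal.ofReal_mul (abs_nonneg c), ← abs_mul, mul_sub, add_sub_add_right_eq_sub]

theorem eVariationOn_image_mul_add {f : ℝ → ℝ} {s : Set ℝ} {a b c d : ℝ} (ha : 0 ≤ a)
    (hf : ∀ x ∈ s, f (a * x + b) = d * f x + c) :
    eVariationOn f ((a * · + b) '' s) = ENNReal.ofReal |d| * eVariationOn f s := by
  have hmono : MonotoneOn (a * · + b) s := fun x _ y _ hxy => by dsimp only; gcongr
  rw [← eVariationOn.comp_eq_of_monotoneOn f _ hmono,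
    eVariationOn.eq_of_eqOn (f := f ∘ (a * · + b)) hf,
    eVariationOn_const_mul_add]

theorem eVariationOn_Icc_eq_sum_Ico {α E : Type*} [LinearOrder α] [PseudoEMetricSpace E]
    (f : α → E) {u : ℕ → α} {m n : ℕ} (hmn : m ≤ n) (hu : MonotoneOn u (Set.Icc m n)) :
    eVariationOn f (Set.Icc (u m) (u n)) =
      ∑ k ∈ Ico m n, eVariationOn f (Set.Icc (u k) (u (k + 1))) := by
  induction n, hmn using Nat.le_induction with
  | base => simp
  | succ n hmn ih =>
    rw [Finset.sum_Ico_succ_top hmn, ← ih (hu.mono (Set.Icc_subset_Icc_right n.le_succ))]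
    have hadd := eVariationOn.Icc_add_Icc f (s := Set.univ)
      (hu ⟨le_rfl, hmn.trans n.le_succ⟩ ⟨hmn, n.le_succ⟩ hmn)
      (hu ⟨hmn, n.le_succ⟩ ⟨hmn.trans n.le_succ, le_rfl⟩ n.le_succ) (Set.mem_univ _)
    simpa only [Set.univ_inter] using hadd.symm

section SelfAffine

variable {n : ℕ} {a d α β : ℕ → ℝ} {f : ℝ → ℝ}

theorem image_mul_add_Icc_zero_one_eq_Icc (ha : ∀ k, 1 ≤ k → k ≤ n → 0 < a k)
    (hα : ∀ k, 1 ≤ k → α (k + 1) = α k + a k) {k : ℕ} (hk1 : 1 ≤ k) (hkn : k ≤ n) :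
    (a k * · + α k) '' Set.Icc 0 1 = Set.Icc (α k) (α (k + 1)) := by
  rw [image_mul_add_Icc_zero_one (ha k hk1 hkn), hα k hk1]

theorem exists_eq_mul_add_of_mem_Icc (hn : 0 < n) (ha : ∀ k, 1 ≤ k → k ≤ n → 0 < a k)
    (hα1 : α 1 = 0) (hα : ∀ k, 1 ≤ k → α (k + 1) = α k + a k) (hαn : α (n + 1) = 1) :
    ∀ x ∈ Set.Icc (0 : ℝ) 1, ∃ k, 1 ≤ k ∧ k ≤ n ∧ ∃ u ∈ Set.Icc (0 : ℝ) 1, a k * u + α k = x := by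
  intro x hx
  rw [← hα1, ← hαn] at hx
  obtain ⟨k, hk1, hkn, hk⟩ := exists_mem_Icc_succ_of_mem_Icc (by omega) hx
  rw [← image_mul_add_Icc_zero_one_eq_Icc ha hα hk1 (by omega)] at hk
  exact ⟨k, hk1, by omega, hk⟩

theorem eVariationOn_Icc_zero_one_eq_mul (ha : ∀ k, 1 ≤ k → k ≤ n → 0 < a k)
    (hα1 : α 1 = 0) (hα : ∀ k, 1 ≤ k → α (k + 1) = α k + a k) (hαn : α (n + 1) = 1)
    (hfix : ∀ k, 1 ≤ k → k ≤ n → ∀ x ∈ Set.Icc (0:ℝ) 1,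
      f (a k * x + α k) = d k * f x + β k) :
    eVariationOn f (Set.Icc 0 1) =
      ENNReal.ofReal (∑ k ∈ Icc 1 n, |d k|) * eVariationOn f (Set.Icc 0 1) := by
  have hαmono := monotoneOn_Icc_of_succ_eq_add hα fun k hk1 hkn => (ha k hk1 hkn).le
  calc eVariationOn f (Set.Icc 0 1)
      = ∑ k ∈ Icc 1 n, eVariationOn f (Set.Icc (α k) (α (k + 1))) := by
        rw [← hα1, ← hαn, eVariationOn_Icc_eq_sum_Ico f (by omega) hαmono,
          Finset.Ico_add_one_right_eq_Icc]
    _ = ∑ k ∈ Icc 1 n, ENNReal.ofReal |d k| * eVariationOn f (Set.Icc 0 1) := by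
        refine Finset.sum_congr rfl fun k hk => ?_
        obtain ⟨hk1, hkn⟩ := Finset.mem_Icc.mp hk
        rw [← image_mul_add_Icc_zero_one_eq_Icc ha hα hk1 hkn,
          eVariationOn_image_mul_add (ha k hk1 hkn).le (hfix k hk1 hkn)]
    _ = _ := by rw [← Finset.sum_mul, ENNReal.ofReal_sum_of_nonneg fun k _ => abs_nonneg (d k)]

theorem mapsTo_Icc_of_selfAffine
    (hcover : ∀ x ∈ Set.Icc (0 : ℝ) 1,
      ∃ k, 1 ≤ k ∧ k ≤ n ∧ ∃ u ∈ Set.Icc (0 : ℝ) 1, a k * u + α k = x)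
    (hd0 : ∀ k, 1 ≤ k → k ≤ n → 0 ≤ d k) (hd1 : ∀ k, 1 ≤ k → k ≤ n → d k < 1)
    (hβ0 : ∀ k, 1 ≤ k → k ≤ n → 0 ≤ β k) (hβd : ∀ k, 1 ≤ k → k ≤ n → β k + d k ≤ 1)
    (hcont : ContinuousOn f (Set.Icc 0 1))
    (hfix : ∀ k, 1 ≤ k → k ≤ n → ∀ x ∈ Set.Icc (0:ℝ) 1,
      f (a k * x + α k) = d k * f x + β k) :
    Set.MapsTo f (Set.Icc 0 1) (Set.Icc 0 1) := by
  have hcontract : ∀ g : ℝ → ℝ, ContinuousOn g (Set.Icc 0 1) →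
      (∀ k, 1 ≤ k → k ≤ n → ∀ u ∈ Set.Icc (0 : ℝ) 1, g (a k * u + α k) ≤ d k * g u) →
      ∀ x ∈ Set.Icc (0 : ℝ) 1, g x ≤ 0 := by
    intro g hg hstep
    refine isCompact_Icc.forall_nonpos_of_le_mul hg fun x hx => ?_
    obtain ⟨k, hk1, hkn, u, hu, rfl⟩ := hcover x hx
    exact ⟨d k, hd1 k hk1 hkn, hd0 k hk1 hkn, u, hu, hstep k hk1 hkn u hu⟩
  have hnonneg := hcontract (fun x => -f x) hcont.neg fun k hk1 hkn u hu => by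
    rw [hfix k hk1 hkn u hu]
    linarith [hβ0 k hk1 hkn]
  have hle_one := hcontract (fun x => f x - 1) (hcont.sub continuousOn_const)
    fun k hk1 hkn u hu => by
      rw [hfix k hk1 hkn u hu]
      linarith [hβd k hk1 hkn]
  exact fun x hx => ⟨by linarith [hnonneg x hx], by linarith [hle_one x hx]⟩

theorem monotoneOn_of_selfAffine_of_mapsTo (ha : ∀ k, 1 ≤ k → k ≤ n → 0 < a k)
    (hα : ∀ k, 1 ≤ k → α (k + 1) = α k + a k) (hαmono : MonotoneOn α (Set.Icc 1 (n + 1)))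
    (hβ : ∀ k, 1 ≤ k → β (k + 1) = β k + d k) (hβmono : MonotoneOn β (Set.Icc 1 (n + 1)))
    (hcover : ∀ x ∈ Set.Icc (0 : ℝ) 1,
      ∃ k, 1 ≤ k ∧ k ≤ n ∧ ∃ u ∈ Set.Icc (0 : ℝ) 1, a k * u + α k = x)
    (hd0 : ∀ k, 1 ≤ k → k ≤ n → 0 ≤ d k) (hd1 : ∀ k, 1 ≤ k → k ≤ n → d k < 1)
    (hcont : ContinuousOn f (Set.Icc 0 1))
    (hfix : ∀ k, 1 ≤ k → k ≤ n → ∀ x ∈ Set.Icc (0:ℝ) 1,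
      f (a k * x + α k) = d k * f x + β k)
    (hf01 : Set.MapsTo f (Set.Icc 0 1) (Set.Icc 0 1)) :
    MonotoneOn f (Set.Icc 0 1) := by
  have hpiece : ∀ k, 1 ≤ k → k ≤ n → ∀ u ∈ Set.Icc (0 : ℝ) 1,
      β k ≤ f (a k * u + α k) ∧ f (a k * u + α k) ≤ β (k + 1) := by
    intro k hk1 hkn u hu
    have hfu := hf01 hu
    have hdk := hd0 k hk1 hkn
    rw [hfix k hk1 hkn u hu, hβ k hk1]
    constructor <;> nlinarith [hfu.1, hfu.2]
  set K : Set (ℝ × ℝ) := Set.Icc 0 1 ×ˢ Set.Icc 0 1 ∩ {p | p.1 ≤ p.2}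
  have hK : IsCompact K :=
    (isCompact_Icc.prod isCompact_Icc).inter_right (isClosed_le continuous_fst continuous_snd)
  have hcontK : ContinuousOn (fun p : ℝ × ℝ => f p.1 - f p.2) K :=
    (hcont.comp continuousOn_fst fun p hp => hp.1.1).sub
      (hcont.comp continuousOn_snd fun p hp => hp.1.2)
  have hdecr := hK.forall_nonpos_of_le_mul hcontK fun ⟨x, y⟩ hxyK => by
    obtain ⟨⟨hx, hy⟩, hxy : x ≤ y⟩ := id hxyK
    obtain ⟨k, hk1, hkn, u, hu, rfl⟩ := hcover x hx
    obtain ⟨l, hl1, hln, v, hv, rfl⟩ := hcover y hy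
    rcases lt_trichotomy k l with hkl | rfl | hlk
    · -- the pieces are ordered: `f ≤ β (k + 1) ≤ β l ≤ f` across them
      have hβkl : β (k + 1) ≤ β l := hβmono ⟨by omega, by omega⟩ ⟨hl1, by omega⟩ hkl
      refine ⟨0, one_pos, le_rfl, _, hxyK, ?_⟩
      linarith [(hpiece k hk1 hkn u hu).2, (hpiece l hl1 hln v hv).1]
    · have huv : u ≤ v := le_of_mul_le_mul_left (by simpa using hxy) (ha k hk1 hkn)
      refine ⟨d k, hd1 k hk1 hkn, hd0 k hk1 hkn, (u, v), ⟨⟨hu, hv⟩, huv⟩, ?_⟩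
      rw [hfix k hk1 hkn u hu, hfix k hk1 hkn v hv]
      linarith
    · -- then `x` and `y` both equal the common endpoint `α k = α (l + 1)`
      have hαlk : α (l + 1) ≤ α k := hαmono ⟨by omega, by omega⟩ ⟨hk1, by omega⟩ hlk
      have hxy' : a k * u + α k = a l * v + α l := by
        nlinarith [hα l hl1, ha k hk1 hkn, ha l hl1 hln, hu.1, hv.2]
      exact ⟨0, one_pos, le_rfl, _, hxyK, by simp [hxy']⟩
  exact fun x hx y hy hxy => by linarith [hdecr (x, y) ⟨⟨hx, hy⟩, hxy⟩]

theorem monotoneOn_of_selfAffine_of_nonneg (hn : 0 < n)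
    (ha : ∀ k, 1 ≤ k → k ≤ n → 0 < a k) (hα1 : α 1 = 0)
    (hα : ∀ k, 1 ≤ k → α (k + 1) = α k + a k) (hαn : α (n + 1) = 1) (hβ1 : β 1 = 0)
    (hβ : ∀ k, 1 ≤ k → β (k + 1) = β k + d k) (hβn : β (n + 1) = 1)
    (hd0 : ∀ k, 1 ≤ k → k ≤ n → 0 ≤ d k) (hd1 : ∀ k, 1 ≤ k → k ≤ n → d k < 1)
    (hcont : ContinuousOn f (Set.Icc 0 1))
    (hfix : ∀ k, 1 ≤ k → k ≤ n → ∀ x ∈ Set.Icc (0:ℝ) 1,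
      f (a k * x + α k) = d k * f x + β k) :
    MonotoneOn f (Set.Icc 0 1) := by
  have hαmono := monotoneOn_Icc_of_succ_eq_add hα fun k hk1 hkn => (ha k hk1 hkn).le
  have hβmono := monotoneOn_Icc_of_succ_eq_add hβ hd0
  have hcover := exists_eq_mul_add_of_mem_Icc hn ha hα1 hα hαn
  have hβ0 : ∀ k, 1 ≤ k → k ≤ n → 0 ≤ β k := fun k hk1 hkn =>
    hβ1 ▸ hβmono ⟨le_rfl, by omega⟩ ⟨hk1, by omega⟩ hk1
  have hβd : ∀ k, 1 ≤ k → k ≤ n → β k + d k ≤ 1 := fun k hk1 hkn =>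
    hβ k hk1 ▸ hβn ▸ hβmono ⟨by omega, by omega⟩ ⟨by omega, le_rfl⟩ (by omega)
  exact monotoneOn_of_selfAffine_of_mapsTo ha hα hαmono hβ hβmono hcover hd0 hd1 hcont hfix
    (mapsTo_Icc_of_selfAffine hcover hd0 hd1 hβ0 hβd hcont hfix)

end SelfAffine

/-- A continuous self-similar function with `f(0) = 0`, `f(1) = 1` and `c_k = 0`
has bounded variation iff `D = ∑ |d_k| ≤ 1`, and its total variation equals
`lim_{m→∞} D^m`. -/
theorem stmt_17 (n : ℕ) (hn : 1 < n) (a d β α : ℕ → ℝ)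
    (ha : ∀ k, 1 ≤ k → k ≤ n → 0 < a k)
    (hsum : ∑ k ∈ Finset.Icc 1 n, a k = 1)
    (hα1 : α 1 = 0) (hα : ∀ k, 1 ≤ k → α (k + 1) = α k + a k)
    (hβ1 : β 1 = 0) (hβ : ∀ k, 1 ≤ k → β (k + 1) = β k + d k)
    (hd1 : ∑ k ∈ Finset.Icc 1 n, d k = 1)
    (hdmax : ∀ k, 1 ≤ k → k ≤ n → |d k| < 1)
    (f : ℝ → ℝ) (hcont : ContinuousOn f (Set.Icc 0 1))
    (hf0 : f 0 = 0) (hf1 : f 1 = 1)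
    (hfix : ∀ k, 1 ≤ k → k ≤ n → ∀ x ∈ Set.Icc (0:ℝ) 1,
      f (a k * x + α k) = d k * f x + β k) :
    (BoundedVariationOn f (Set.Icc 0 1) ↔ ∑ k ∈ Finset.Icc 1 n, |d k| ≤ 1)
    ∧ Tendsto (fun m : ℕ => ENNReal.ofReal ((∑ k ∈ Finset.Icc 1 n, |d k|) ^ m))
        atTop (nhds (eVariationOn f (Set.Icc 0 1))) := by
  set D := ∑ k ∈ Icc 1 n, |d k|
  set V := eVariationOn f (Set.Icc 0 1)
  have hαn : α (n + 1) = 1 := by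
    rw [eq_add_sum_Icc_of_succ_eq_add (by omega) hα, hα1, hsum, zero_add]
  have hV : V = ENNReal.ofReal D * V := eVariationOn_Icc_zero_one_eq_mul ha hα1 hα hαn hfix
  have hD1 : 1 ≤ D := hd1 ▸ Finset.sum_le_sum fun k _ => le_abs_self (d k)
  rcases hD1.eq_or_lt with hD | hD
  · have hd0 : ∀ k, 1 ≤ k → k ≤ n → 0 ≤ d k := fun k hk1 hkn =>
      nonneg_of_sum_abs_le_sum (by rw [hd1]; exact hD.symm.le) (Finset.mem_Icc.mpr ⟨hk1, hkn⟩)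
    have hβn : β (n + 1) = 1 := by
      rw [eq_add_sum_Icc_of_succ_eq_add (by omega) hβ, hβ1, hd1, zero_add]
    have hmono := monotoneOn_of_selfAffine_of_nonneg (by omega) ha hα1 hα hαn hβ1 hβ hβn hd0
      (fun k hk1 hkn => (le_abs_self _).trans_lt (hdmax k hk1 hkn)) hcont hfix
    have hV : V = 1 := by
      simpa [hf0, hf1] using hmono.eVariationOn_eq (a := 0) (b := 1) ⟨le_rfl, zero_le_one⟩
        ⟨zero_le_one, le_rfl⟩
    refine ⟨⟨fun _ => hD.ge, fun _ => show V ≠ ⊤ from hV ▸ ENNReal.one_ne_top⟩, ?_⟩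
    simp [← hD, hV]
  · have hV1 : 1 ≤ V := by
      simpa [hf0, hf1] using eVariationOn.edist_le f (s := Set.Icc 0 1) (x := 1) (y := 0)
        ⟨zero_le_one, le_rfl⟩ ⟨le_rfl, zero_le_one⟩
    have hVtop : V = ⊤ :=
      ENNReal.eq_top_of_eq_mul_self hV (by simpa using hD) (one_pos.trans_le hV1).ne'
    refine ⟨⟨fun hBV => absurd hVtop hBV, fun h => absurd h hD.not_ge⟩, ?_⟩
    rw [hVtop]
    exact ENNReal.tendsto_ofReal_atTop.comp (tendsto_pow_atTop_atTop_of_one_lt hD)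
end
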